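/- arXiv:2208.00432 — 10 statements merged into one kernel-verified Lean document; each statement's English description precedes it below -/
import Mathlib

section
/- For every good decomposition (I_1,...,I_n) of [q], the polynomial f_{I_1,...,I_n}(x_1,...,x_n) = ∏_{j=1}^n ∏_{t ∈ i(I_j)} (x_j − t) vanishes at every point of J(n,q). -/
/-!
Let `g j` be the index of the block `I (g j)` containing `v j`. Because the blocks are ordered and
`v` is monotone, `g` is a monotone self-map of the finite chain `Fin n`, so by Knaster–Tarski it
has a fixed point `j`. Then `v j ∈ I j`, so the factor `x_j - i (v j)` of the product vanishes at
the point `(i (v 1), …, i (v n))`.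
-/

open Function

theorem Monotone.exists_isFixedPt_of_finite {α : Type*} [Lattice α] [Fintype α] [Nonempty α]
    {f : α → α} (hf : Monotone f) : ∃ a, IsFixedPt f a :=
  letI := Fintype.toCompleteLatticeOfNonempty α
  ⟨_, OrderHom.isFixedPt_lfp ⟨f, hf⟩⟩

theorem monotone_blockIndex {ι κ β : Type*} [Preorder ι] [LinearOrder κ] [Preorder β]
    {I : κ → Set β} (horder : ∀ j k, j < k → ∀ a ∈ I j, ∀ b ∈ I k, a < b)
    {v : ι → β} (hv : Monotone v) {g : ι → κ} (hg : ∀ j, v j ∈ I (g j)) : Monotone g := by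
  intro a b hab
  by_contra! h
  exact (horder _ _ h _ (hg b) _ (hg a)).not_ge (hv hab)

theorem stmt_3_general {F : Type*} [Field F] (n q : ℕ) (hn : 1 ≤ n)
    (i : Fin q → F)
    (I : Fin n → Finset (Fin q))
    (hcover : ∀ a : Fin q, ∃ j, a ∈ I j)
    (horder : ∀ j k : Fin n, j < k → ∀ a ∈ I j, ∀ b ∈ I k, a < b)
    (v : Fin n → Fin q) (hv : Monotone v) :
    MvPolynomial.eval (fun j => i (v j))
      (∏ j : Fin n, ∏ t ∈ I j, (MvPolynomial.X j - MvPolynomial.C (i t))) = 0 := by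
  have : Nonempty (Fin n) := ⟨⟨0, hn⟩⟩
  choose g hg using fun j => hcover (v j)
  have hg_mono : Monotone g := monotone_blockIndex (I := fun k => (I k : Set (Fin q))) horder hv hg
  obtain ⟨j, hj⟩ := hg_mono.exists_isFixedPt_of_finite
  rw [map_prod]
  refine Finset.prod_eq_zero (Finset.mem_univ j) ?_
  rw [map_prod]
  exact Finset.prod_eq_zero (hj ▸ hg j) (by simp)

theorem stmt_3 {F : Type*} [Field F] (n q : ℕ) (hn : 1 ≤ n) (hq : 1 ≤ q)
    (i : Fin q → F) (hi : Function.Injective i)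
    (I : Fin n → Finset (Fin q))
    (hcover : ∀ a : Fin q, ∃ j, a ∈ I j)
    (horder : ∀ j k : Fin n, j < k → ∀ a ∈ I j, ∀ b ∈ I k, a < b)
    (v : Fin n → Fin q) (hv : Monotone v) :
    MvPolynomial.eval (fun j => i (v j))
      (∏ j : Fin n, ∏ t ∈ I j, (MvPolynomial.X j - MvPolynomial.C (i t))) = 0 :=
  stmt_3_general n q hn i I hcover horder v hv
end

section
/- If f is a nonzero polynomial in F[x_1,...,x_n] of total degree at most q − 1, then there exists a vector v ∈ J(n,q) with f(v) ≠ 0. -/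
/-!
Induct on the number of variables, with the extra requirement that all coordinates of `v` be
at least a prescribed `k`, where `k + totalDegree f < q`. Write `f` as a polynomial in `x₀`
of degree `d` with leading coefficient `g`, so that `totalDegree g + d ≤ totalDegree f`. By
induction the remaining coordinates can be chosen `≥ k + d` with `g` not vanishing there; the
resulting univariate polynomial in `x₀` is nonzero of degree at most `d`, so it does not vanish
at one of the `d + 1` points `i k, …, i (k + d)`, which may serve as the (smallest) first
coordinate.
-/

open MvPolynomial Function

lemma Fin.monotone_cons {α : Type*} [Preorder α] {n : ℕ} {a : α} {f : Fin n → α} :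
    Monotone (Fin.cons a f : Fin (n + 1) → α) ↔ (∀ j, a ≤ f j) ∧ Monotone f :=
  monotone_iff_forall_lt.trans <|
    (Fin.liftFun_cons (· ≤ ·)).trans (and_congr_right' monotone_iff_forall_lt.symm)

lemma Polynomial.exists_eval_ne_zero_of_natDegree_le {R : Type*} [CommRing R] [IsDomain R]
    {q : ℕ} {i : Fin q → R} (hi : Injective i) {p : Polynomial R} (hp : p ≠ 0)
    {k d : ℕ} (hpd : p.natDegree ≤ d) (hkd : k + d < q) :
    ∃ a : Fin q, k ≤ (a : ℕ) ∧ (a : ℕ) ≤ k + d ∧ p.eval (i a) ≠ 0 := by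
  by_contra! h
  let point (m : Fin (d + 1)) : Fin q := ⟨k + m, by omega⟩
  have hpoint : Injective point := fun m m' h => by
    simpa [point, Fin.ext_iff] using h
  refine hp (eq_zero_of_natDegree_lt_card_of_eval_eq_zero p (hi.comp hpoint)
    (fun m => h _ (by simp [point]) (by simp [point]; omega)) ?_)
  simpa using Nat.lt_succ_of_le hpd

theorem MvPolynomial.exists_monotone_eval_ne_zero {R : Type*} [CommRing R] [IsDomain R]
    {q : ℕ} {i : Fin q → R} (hi : Injective i) {n : ℕ} {f : MvPolynomial (Fin n) R}
    (hf : f ≠ 0) {k : ℕ} (hk : k + f.totalDegree < q) :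
    ∃ v : Fin n → Fin q, Monotone v ∧ (∀ j, k ≤ (v j : ℕ)) ∧ eval (i ∘ v) f ≠ 0 := by
  induction n generalizing k with
  | zero =>
    obtain ⟨c, rfl⟩ := C_surjective (Fin 0) f
    exact ⟨finZeroElim, Subsingleton.monotone _, finZeroElim, by simpa using hf⟩
  | succ n ih =>
    set p := finSuccEquiv R n f
    set d := p.natDegree
    have hp : p ≠ 0 := by simpa [p] using hf
    have hg : p.leadingCoeff ≠ 0 := Polynomial.leadingCoeff_ne_zero.mpr hp
    have hdeg : p.leadingCoeff.totalDegree + d ≤ f.totalDegree :=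
      totalDegree_coeff_finSuccEquiv_add_le f d hg
    obtain ⟨w, hw_mono, hw_ge, hw_eval⟩ := ih hg (k := k + d) (by omega)
    have hP : p.map (eval (i ∘ w)) ≠ 0 := fun h => hw_eval <| by
      simpa [d] using congrArg (Polynomial.coeff · d) h
    obtain ⟨a, hka, had, ha⟩ :=
      Polynomial.exists_eval_ne_zero_of_natDegree_le hi hP Polynomial.natDegree_map_le
        (show k + d < q by omega)
    refine ⟨Fin.cons a w, Fin.monotone_cons.mpr ⟨fun j => ?_, hw_mono⟩, ?_, ?_⟩
    · exact Fin.mk_le_mk.mpr (had.trans (hw_ge j))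
    · exact Fin.cases hka fun j => (Nat.le_add_right k d).trans (hw_ge j)
    · rwa [Fin.comp_cons, eval_eq_eval_mv_eval']

theorem stmt_4_general {F : Type*} [Field F] (n q : ℕ) (hq : 1 ≤ q)
    (i : Fin q → F) (hi : Function.Injective i)
    (f : MvPolynomial (Fin n) F) (hf : f ≠ 0) (hdeg : f.totalDegree ≤ q - 1) :
    ∃ v : Fin n → Fin q, Monotone v ∧ MvPolynomial.eval (fun j => i (v j)) f ≠ 0 := by
  obtain ⟨v, hv_mono, -, hv_eval⟩ := exists_monotone_eval_ne_zero hi hf (k := 0) (by omega)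
  exact ⟨v, hv_mono, hv_eval⟩

theorem stmt_4 {F : Type*} [Field F] (n q : ℕ) (hn : 1 ≤ n) (hq : 1 ≤ q)
    (i : Fin q → F) (hi : Function.Injective i)
    (f : MvPolynomial (Fin n) F) (hf : f ≠ 0) (hdeg : f.totalDegree ≤ q - 1) :
    ∃ v : Fin n → Fin q, Monotone v ∧ MvPolynomial.eval (fun j => i (v j)) f ≠ 0 :=
  stmt_4_general n q hq i hi f hf hdeg
end

section
/- If f is a nonzero polynomial in F[x_1,...,x_n] of total degree at most q − n, then there exists a vector v ∈ SJ(n,q) with f(v) ≠ 0. -/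
open MvPolynomial

attribute [local instance] Classical.propDecidable

lemma stmt_5_aux {F : Type*} [Field F] :
    ∀ n q : ℕ, n ≤ q → ∀ i : Fin q → F, Function.Injective i →
    ∀ f : MvPolynomial (Fin n) F, f ≠ 0 → f.totalDegree ≤ q - n →
    ∃ v : Fin n → Fin q, StrictMono v ∧ MvPolynomial.eval (fun j => i (v j)) f ≠ 0 := by
  intro n
  induction n with
  | zero =>
    intro q _ i _ f hf _
    refine ⟨Fin.elim0, fun a => a.elim0, ?_⟩
    obtain ⟨c, rfl⟩ := MvPolynomial.C_surjective (Fin 0) f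
    have hc : c ≠ 0 := fun h => hf (by rw [h, map_zero])
    simpa using hc
  | succ n IH =>
    intro q hnq i hi f hf hdeg
    set p := finSuccEquiv F n f with hp
    have hp0 : p ≠ 0 := by
      simpa [hp] using (map_ne_zero_iff _ (finSuccEquiv F n).injective).mpr hf
    set d := p.natDegree with hd
    have hc : p.coeff d ≠ 0 := Polynomial.coeff_ne_zero_of_eq_degree
      (Polynomial.degree_eq_natDegree hp0)
    have hdc : (p.coeff d).totalDegree + d ≤ f.totalDegree :=
      totalDegree_coeff_finSuccEquiv_add_le f d hc
    have hdq : d + (n + 1) ≤ q := by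
      have := le_trans hdc hdeg; omega
    -- restricted injection
    set i' : Fin (q - d - 1) → F := fun k => i ⟨d + 1 + k, by omega⟩ with hi'def
    have hi' : Function.Injective i' := by
      intro a b hab
      have := hi hab
      have : d + 1 + (a : ℕ) = d + 1 + (b : ℕ) := congrArg Fin.val this
      exact Fin.ext (by omega)
    have hdeg' : (p.coeff d).totalDegree ≤ (q - d - 1) - n := by omega
    obtain ⟨v', hv'mono, hv'eval⟩ := IH (q - d - 1) (by omega) i' hi' (p.coeff d) hc hdeg'
    -- the one-variable polynomial
    set P : Polynomial F := p.map (MvPolynomial.eval (fun j => i' (v' j))) with hP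
    have hPc : P.coeff d ≠ 0 := by
      rw [hP, Polynomial.coeff_map]; exact hv'eval
    have hP0 : P ≠ 0 := fun h => hPc (by rw [h, Polynomial.coeff_zero])
    have hPdeg : P.natDegree ≤ d := Polynomial.natDegree_map_le
    -- find a non-root among i 0, ..., i d
    have hroots : P.roots.toFinset.card ≤ d :=
      le_trans (Multiset.toFinset_card_le _) (le_trans (Polynomial.card_roots' P) hPdeg)
    set t : Finset F := Finset.image (fun k : Fin (d + 1) => i ⟨k, by omega⟩) Finset.univ with ht
    have htcard : t.card = d + 1 := by
      rw [ht, Finset.card_image_of_injective _ (fun a b hab => by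
        have := hi hab
        exact Fin.ext (by simpa using congrArg Fin.val this))]
      simp
    have hex : ∃ a ∈ t, a ∉ P.roots.toFinset := by
      by_contra h
      push_neg at h
      have := Finset.card_le_card h
      omega
    obtain ⟨a, hat, hanr⟩ := hex
    rw [ht, Finset.mem_image] at hat
    obtain ⟨k, -, rfl⟩ := hat
    have heval0 : P.eval (i ⟨k, by omega⟩) ≠ 0 := by
      intro h
      exact hanr (by rw [Multiset.mem_toFinset, Polynomial.mem_roots hP0]; exact h)
    -- build the vector
    set v0 : Fin q := ⟨k, by omega⟩ with hv0
    set w : Fin n → Fin q := fun j => ⟨d + 1 + v' j, by omega⟩ with hw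
    refine ⟨Fin.cons v0 w, ?_, ?_⟩
    · intro x y hxy
      induction y using Fin.cases with
      | zero => exact absurd hxy (Fin.not_lt_zero x).elim
      | succ b =>
        induction x using Fin.cases with
        | zero =>
          simp only [Fin.cons_zero, Fin.cons_succ]
          exact Fin.mk_lt_mk.mpr (by have : (k : ℕ) < d + 1 := k.isLt; omega)
        | succ a =>
          simp only [Fin.cons_succ]
          have hab : a < b := by
            have := hxy
            rwa [Fin.succ_lt_succ_iff] at this
          have hv : (v' a : ℕ) < (v' b : ℕ) := hv'mono hab
          exact Fin.mk_lt_mk.mpr (by omega)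
    · have hcons : (fun j => i ((Fin.cons v0 w : Fin (n+1) → Fin q) j)) =
          Fin.cons (i v0) (fun j => i (w j)) := by
        funext j
        refine Fin.cases ?_ ?_ j <;> simp
      rw [hcons, eval_eq_eval_mv_eval']
      have hmap : (fun j => i (w j)) = fun j => i' (v' j) := by
        funext j; rfl
      rw [hmap, ← hp, ← hP]
      exact heval0

theorem stmt_5 {F : Type*} [Field F] (n q : ℕ) (hn : 1 ≤ n) (hnq : n ≤ q)
    (i : Fin q → F) (hi : Function.Injective i)
    (f : MvPolynomial (Fin n) F) (hf : f ≠ 0) (hdeg : f.totalDegree ≤ q - n) :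
    ∃ v : Fin n → Fin q, StrictMono v ∧ MvPolynomial.eval (fun j => i (v j)) f ≠ 0 :=
  stmt_5_aux n q hnq i hi f hf hdeg
end

section
/- The restrictions to J(n,q) of the monomials x^u with total degree deg(x^u) ≤ q − 1 form a basis of the F-vector space of all functions from J(n,q) to F. In particular, the monomials of degree at most q − 1 are linearly independent as functions on J(n,q). -/
open MvPolynomial

private lemma fsum_add {n : ℕ} (a b : Fin n →₀ ℕ) :
    ((a + b).sum fun _ e => e) = (a.sum fun _ e => e) + (b.sum fun _ e => e) :=
  Finsupp.sum_add_index' (fun _ => rfl) (fun _ _ _ => rfl)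

private lemma deg_lb {F : Type*} [Field F] {n : ℕ} (j : Fin n) (c : F)
    {R : MvPolynomial (Fin n) F} (hR : R ≠ 0) :
    R.totalDegree + 1 ≤ ((X j - C c) * R).totalDegree := by
  have hsup : R.support.Nonempty := by
    rw [Finset.nonempty_iff_ne_empty, Ne, MvPolynomial.support_eq_empty]; exact hR
  obtain ⟨d, hd, hdeq⟩ := Finset.exists_mem_eq_sup R.support hsup
    (fun s : Fin n →₀ ℕ => s.sum fun _ e => e)
  have hdsum : (d.sum fun _ e => e) = R.totalDegree := hdeq.symm
  have hkey : ((Finsupp.single j 1 + d).sum fun _ e => e) = R.totalDegree + 1 := by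
    rw [fsum_add, Finsupp.sum_single_index rfl, hdsum, add_comm]
  have hcoeff : MvPolynomial.coeff (Finsupp.single j 1 + d) ((X j - C c) * R)
      = MvPolynomial.coeff d R := by
    rw [sub_mul, MvPolynomial.coeff_sub, MvPolynomial.coeff_X_mul,
      MvPolynomial.coeff_C_mul]
    have h0 : MvPolynomial.coeff (Finsupp.single j 1 + d) R = 0 := by
      apply MvPolynomial.coeff_eq_zero_of_totalDegree_lt
      have hkey' : (∑ x ∈ (Finsupp.single j 1 + d).support, (Finsupp.single j 1 + d : Fin n →₀ ℕ) x)
          = R.totalDegree + 1 := hkey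
      omega
    rw [h0, mul_zero, sub_zero]
  have hmem : (Finsupp.single j 1 + d) ∈ ((X j - C c) * R).support := by
    rw [MvPolynomial.mem_support_iff, hcoeff]
    exact MvPolynomial.mem_support_iff.mp hd
  have h := MvPolynomial.le_totalDegree hmem
  rwa [hkey] at h

private lemma monotone_cons_zero {m q : ℕ} {v : Fin m → Fin (q + 1)} (hv : Monotone v) :
    Monotone (Fin.cons 0 v : Fin (m + 1) → Fin (q + 1)) := by
  intro a b hab
  induction a using Fin.cases with
  | zero =>
    induction b using Fin.cases with
    | zero => exact le_refl _
    | succ b => simp only [Fin.cons_zero, Fin.cons_succ]; exact Fin.zero_le _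
  | succ a =>
    induction b using Fin.cases with
    | zero =>
      exact absurd (le_antisymm hab (Fin.zero_le _)) (Fin.succ_ne_zero a)
    | succ b =>
      simp only [Fin.cons_succ]
      exact hv ((Fin.strictMono_succ.le_iff_le).mp hab)

private lemma lemA {F : Type*} [Field F] :
    ∀ N n q : ℕ, n + q ≤ N → ∀ (i : Fin q → F), Function.Injective i →
    ∀ P : MvPolynomial (Fin n) F, P.totalDegree < q →
    (∀ v : Fin n → Fin q, Monotone v → eval (fun j => i (v j)) P = 0) → P = 0 := by
  intro N
  induction N with
  | zero =>
    intro n q hnq i hi P hP hv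
    omega
  | succ N IH =>
    intro n q hnq i hi P hP hv
    cases q with
    | zero => omega
    | succ q' =>
    cases n with
    | zero =>
      have h0 := hv (fun j => j.elim0) (fun a _ _ => a.elim0)
      rw [MvPolynomial.eq_C_of_isEmpty P] at h0 ⊢
      rw [MvPolynomial.eval_C] at h0
      rw [h0, map_zero]
    | succ m =>
      have heval : ∀ y : Fin m → F,
          eval y (Polynomial.eval (C (i 0)) (MvPolynomial.finSuccEquiv F m P))
            = eval (Fin.cons (i 0) y) P := by
        intro y
        rw [eval_eq_eval_mv_eval', Polynomial.eval_map]
        have h2 := Polynomial.eval₂_hom (p := MvPolynomial.finSuccEquiv F m P)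
          (eval y) (C (i 0))
        rw [MvPolynomial.eval_C] at h2
        exact h2.symm
      have hSvanish : ∀ v' : Fin m → Fin (q'+1), Monotone v' →
          eval (fun j => i (v' j))
            (Polynomial.eval (C (i 0)) (MvPolynomial.finSuccEquiv F m P)) = 0 := by
        intro v' hv'
        rw [heval]
        have hfun : (Fin.cons (i 0) (fun j => i (v' j)) : Fin (m+1) → F)
            = fun j => i ((Fin.cons 0 v' : Fin (m+1) → Fin (q'+1)) j) := by
          funext j
          induction j using Fin.cases with
          | zero => simp
          | succ j => simp
        rw [hfun]
        exact hv _ (monotone_cons_zero hv')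
      have hSdeg :
          (Polynomial.eval (C (i 0)) (MvPolynomial.finSuccEquiv F m P)).totalDegree
            < q' + 1 := by
        rw [Polynomial.eval_eq_sum_range]
        refine lt_of_le_of_lt (MvPolynomial.totalDegree_finset_sum _ _) ?_
        rw [Finset.sup_lt_iff (by positivity)]
        intro k _
        refine lt_of_le_of_lt (MvPolynomial.totalDegree_mul _ _) ?_
        have h2 : ((C (i 0) : MvPolynomial (Fin m) F) ^ k).totalDegree = 0 := by
          refine le_antisymm ?_ (Nat.zero_le _)
          refine le_trans (MvPolynomial.totalDegree_pow _ _) ?_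
          simp [MvPolynomial.totalDegree_C]
        rw [h2]
        rcases eq_or_ne ((MvPolynomial.finSuccEquiv F m P).coeff k) 0 with h | h
        · simp [h]
        · have h1 := totalDegree_coeff_finSuccEquiv_add_le P k h
          omega
      have hS0 : Polynomial.eval (C (i 0)) (MvPolynomial.finSuccEquiv F m P) = 0 :=
        IH m (q'+1) (by omega) i hi _ hSdeg hSvanish
      have hdvd : (Polynomial.X - Polynomial.C (C (i 0))) ∣
          MvPolynomial.finSuccEquiv F m P :=
        Polynomial.dvd_iff_isRoot.mpr hS0
      obtain ⟨T, hT⟩ := hdvd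
      have hPR : P = (X 0 - C (i 0)) *
          ((MvPolynomial.finSuccEquiv F m).symm T) := by
        apply (MvPolynomial.finSuccEquiv F m).injective
        rw [map_mul, map_sub, MvPolynomial.finSuccEquiv_X_zero]
        have h3 : (MvPolynomial.finSuccEquiv F m).symm (Polynomial.C (C (i 0)))
            = C (i 0) :=
          RingHom.congr_fun (MvPolynomial.finSuccEquiv_comp_C_eq_C m) (i 0)
        have hC : (MvPolynomial.finSuccEquiv F m) (C (i 0))
            = Polynomial.C (C (i 0)) := by
          rw [← h3, AlgEquiv.apply_symm_apply]
        rw [hC, AlgEquiv.apply_symm_apply]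
        exact hT
      rcases eq_or_ne ((MvPolynomial.finSuccEquiv F m).symm T) 0 with h0 | h0
      · rw [hPR, h0, mul_zero]
      · have hRdeg : ((MvPolynomial.finSuccEquiv F m).symm T).totalDegree < q' := by
          have h := deg_lb (0 : Fin (m+1)) (i 0) h0
          rw [← hPR] at h
          omega
        have hRvanish : ∀ w : Fin (m+1) → Fin q', Monotone w →
            eval (fun j => (fun t : Fin q' => i t.succ) (w j))
              ((MvPolynomial.finSuccEquiv F m).symm T) = 0 := by
          intro w hw
          have hmono : Monotone (fun j => (w j).succ : Fin (m+1) → Fin (q'+1)) :=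
            fun a b hab => Fin.strictMono_succ.monotone (hw hab)
          have h := hv _ hmono
          rw [hPR, map_mul, map_sub, MvPolynomial.eval_X, MvPolynomial.eval_C] at h
          rcases mul_eq_zero.mp h with h | h
          · exact absurd (hi (sub_eq_zero.mp h)) (Fin.succ_ne_zero (w 0))
          · exact h
        have hfin : (MvPolynomial.finSuccEquiv F m).symm T = 0 :=
          IH (m+1) q' (by omega) (fun t : Fin q' => i t.succ)
            (fun a b hab => Fin.succ_injective _ (hi hab)) _ hRdeg hRvanish
        exact absurd hfin h0
open MvPolynomial

private def iNF {F : Type*} [Field F] {q : ℕ} (i : Fin q → F) (t : ℕ) : F :=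
  if h : t < q then i ⟨t, h⟩ else 0

private def prevLB {n q : ℕ} (v : Fin n → Fin q) (j : Fin n) : ℕ :=
  if (j : ℕ) = 0 then 0
  else (v ⟨(j : ℕ) - 1, lt_of_le_of_lt (Nat.sub_le _ _) j.isLt⟩ : ℕ)

private noncomputable def Gpoly {F : Type*} [Field F] {n q : ℕ} (i : Fin q → F)
    (v : Fin n → Fin q) : MvPolynomial (Fin n) F :=
  ∏ j : Fin n, ∏ t ∈ Finset.Ico (prevLB v j) ((v j : ℕ)),
    (MvPolynomial.X j - MvPolynomial.C (iNF i t))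

private lemma tele (W : ℕ → ℕ) (hW : Monotone W) :
    ∀ m, (∑ k ∈ Finset.range m, (W k - if k = 0 then 0 else W (k - 1))) ≤ W (m - 1) := by
  intro m
  induction m with
  | zero => simp
  | succ m IH =>
    rw [Finset.sum_range_succ]
    rcases Nat.eq_zero_or_pos m with h | h
    · subst h; simp
    · have h1 : W (m - 1) ≤ W m := hW (by omega)
      have h2 : (if m = 0 then 0 else W (m - 1)) = W (m - 1) := by
        rw [if_neg (by omega)]
      rw [h2]
      simp only [Nat.add_sub_cancel]
      omega

private lemma Gpoly_totalDegree {F : Type*} [Field F] {n q : ℕ} (hn : 1 ≤ n)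
    (i : Fin q → F) {v : Fin n → Fin q} (hv : Monotone v) :
    (Gpoly i v).totalDegree ≤ q - 1 := by
  have hfac : ∀ (j : Fin n) (c : F),
      (MvPolynomial.X j - MvPolynomial.C c : MvPolynomial (Fin n) F).totalDegree ≤ 1 := by
    intro j c
    rw [sub_eq_add_neg]
    refine le_trans (MvPolynomial.totalDegree_add _ _) ?_
    simp [MvPolynomial.totalDegree_X, MvPolynomial.totalDegree_neg,
      MvPolynomial.totalDegree_C]
  refine le_trans (MvPolynomial.totalDegree_finset_prod _ _) ?_
  have hinner : ∀ j : Fin n,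
      (∏ t ∈ Finset.Ico (prevLB v j) ((v j : ℕ)),
        (MvPolynomial.X j - MvPolynomial.C (iNF i t) :
          MvPolynomial (Fin n) F)).totalDegree ≤ (v j : ℕ) - prevLB v j := by
    intro j
    refine le_trans (MvPolynomial.totalDegree_finset_prod _ _) ?_
    refine le_trans (Finset.sum_le_sum fun t _ => hfac j (iNF i t)) ?_
    simp [Nat.card_Ico]
  refine le_trans (Finset.sum_le_sum fun j _ => hinner j) ?_
  -- telescoping bound
  set W : ℕ → ℕ := fun k => (v ⟨min k (n - 1), by omega⟩ : ℕ) with hW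
  have hWeq : ∀ k (hk : k < n), W k = (v ⟨k, hk⟩ : ℕ) := by
    intro k hk
    have h : (⟨min k (n - 1), by omega⟩ : Fin n) = ⟨k, hk⟩ := by
      apply Fin.ext; show min k (n - 1) = k; omega
    exact congrArg (fun z : Fin n => ((v z : ℕ))) h
  have hWmono : Monotone W := by
    intro a b hab
    exact hv (by simp [Fin.mk_le_mk]; omega)
  have hconv : ∀ j : Fin n, (v j : ℕ) - prevLB v j
      = W j.1 - (if j.1 = 0 then 0 else W (j.1 - 1)) := by
    intro j
    have hWj : W j.1 = (v j : ℕ) := by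
      rw [hWeq j.1 j.isLt]
    rcases Nat.eq_zero_or_pos j.1 with h | h
    · have hp : prevLB v j = 0 := by rw [prevLB, if_pos h]
      rw [hp, if_pos h, ← h, hWj]
    · have h2 : prevLB v j = W (j.1 - 1) := by
        rw [prevLB, if_neg (by omega),
          hWeq (j.1 - 1) (lt_of_le_of_lt (Nat.sub_le _ _) j.isLt)]
      rw [hWj, h2, if_neg (by omega)]
  calc ∑ j : Fin n, ((v j : ℕ) - prevLB v j)
      = ∑ j : Fin n, (W j.1 - (if j.1 = 0 then 0 else W (j.1 - 1))) := by
        exact Finset.sum_congr rfl fun j _ => hconv j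
    _ = ∑ k ∈ Finset.range n, (W k - if k = 0 then 0 else W (k - 1)) :=
        Fin.sum_univ_eq_sum_range (fun k => W k - if k = 0 then 0 else W (k - 1)) n
    _ ≤ W (n - 1) := tele W hWmono n
    _ ≤ q - 1 := by
        have h1 := hWeq (n - 1) (by omega)
        have h2 := (v ⟨n - 1, by omega⟩).isLt
        omega

private lemma Gpoly_eval {F : Type*} [Field F] {n q : ℕ} (i : Fin q → F)
    (v : Fin n → Fin q) (x : Fin n → F) :
    eval x (Gpoly i v)
      = ∏ j : Fin n, ∏ t ∈ Finset.Ico (prevLB v j) ((v j : ℕ)), (x j - iNF i t) := by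
  rw [Gpoly, map_prod]
  refine Finset.prod_congr rfl fun j _ => ?_
  rw [map_prod]
  refine Finset.prod_congr rfl fun t _ => ?_
  rw [map_sub, MvPolynomial.eval_X, MvPolynomial.eval_C]

private lemma Gpoly_diag {F : Type*} [Field F] {n q : ℕ} {i : Fin q → F}
    (hi : Function.Injective i) {v : Fin n → Fin q} :
    eval (fun j => i (v j)) (Gpoly i v) ≠ 0 := by
  rw [Gpoly_eval]
  rw [Finset.prod_ne_zero_iff]
  intro j _
  rw [Finset.prod_ne_zero_iff]
  intro t ht
  rw [Finset.mem_Ico] at ht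
  have htq : t < q := lt_trans ht.2 (v j).isLt
  rw [iNF, dif_pos htq]
  rw [sub_ne_zero]
  intro hcontra
  have : v j = ⟨t, htq⟩ := hi hcontra
  rw [Fin.ext_iff] at this
  simp at this
  omega

private lemma Gpoly_tri {F : Type*} [Field F] {n q : ℕ} {i : Fin q → F}
    (hi : Function.Injective i) {v w : Fin n → Fin q} (hw : Monotone w)
    (hne : eval (fun j => i (w j)) (Gpoly i v) ≠ 0) : v ≤ w := by
  rw [Gpoly_eval, Finset.prod_ne_zero_iff] at hne
  -- each coordinate of w avoids the interval [prevLB v j, v j)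
  have havoid : ∀ j : Fin n, (w j : ℕ) < prevLB v j ∨ (v j : ℕ) ≤ (w j : ℕ) := by
    intro j
    by_contra hcon
    push_neg at hcon
    obtain ⟨h1, h2⟩ := hcon
    have hmem : (w j : ℕ) ∈ Finset.Ico (prevLB v j) ((v j : ℕ)) :=
      Finset.mem_Ico.mpr ⟨h1, h2⟩
    have := (Finset.prod_ne_zero_iff.mp (hne j (Finset.mem_univ j))) _ hmem
    apply this
    have htq : (w j : ℕ) < q := (w j).isLt
    rw [iNF, dif_pos htq]
    simp
  -- strong induction on the index
  have hmain : ∀ k (hk : k < n), v ⟨k, hk⟩ ≤ w ⟨k, hk⟩ := by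
    intro k
    induction k using Nat.strong_induction_on with
    | _ k IH =>
      intro hk
      rcases havoid ⟨k, hk⟩ with h | h
      · exfalso
        rcases Nat.eq_zero_or_pos k with h0 | h0
        · rw [prevLB] at h
          simp [h0] at h
        · rw [prevLB, if_neg (by show ¬ (k = 0); omega)] at h
          have hprev := IH (k - 1) (by omega) (by omega)
          have hwmono : w ⟨k - 1, by omega⟩ ≤ w ⟨k, hk⟩ :=
            hw (by rw [Fin.mk_le_mk]; omega)
          rw [Fin.le_def] at hprev hwmono
          simp at h hprev hwmono
          omega
      · rw [Fin.le_def]; exact h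
  intro j
  have := hmain j.1 j.isLt
  simpa using this

theorem stmt_6 {F : Type*} [Field F] (n q : ℕ) (hn : 1 ≤ n) (hq : 1 ≤ q)
    (i : Fin q → F) (hi : Function.Injective i) :
    let J : Set (Fin n → F) :=
      {x | ∃ v : Fin n → Fin q, Monotone v ∧ x = fun j => i (v j)}
    let fam : {u : Fin n → ℕ // ∑ j, u j ≤ q - 1} → (J → F) :=
      fun u x => ∏ j, (x.1 j) ^ (u.1 j)
    LinearIndependent F fam ∧ Submodule.span F (Set.range fam) = ⊤ := by
  classical
  intro J fam
  -- setup for the spanning half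
  haveI : Fintype {v : Fin n → Fin q // Monotone v} := Fintype.ofFinite _
  have hJmem : ∀ v : {v : Fin n → Fin q // Monotone v}, (fun j => i (v.1 j)) ∈ J :=
    fun v => ⟨v.1, v.2, rfl⟩
  set e : {v : Fin n → Fin q // Monotone v} → ↥J :=
    fun v => ⟨fun j => i (v.1 j), hJmem v⟩ with he
  have he_surj : Function.Surjective e := by
    rintro ⟨x, v, hv, hx⟩
    exact ⟨⟨v, hv⟩, Subtype.ext hx.symm⟩
  have he_inj : Function.Injective e := by
    intro a b hab
    apply Subtype.ext
    funext j
    exact hi (congrFun (congrArg Subtype.val hab) j)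
  haveI : Finite ↥J := Finite.of_surjective e he_surj
  haveI : Fintype ↥J := Fintype.ofFinite _
  constructor
  · -- linear independence
    rw [linearIndependent_iff']
    intro s g hsum u hu
    set P : MvPolynomial (Fin n) F :=
      ∑ u' ∈ s, MvPolynomial.monomial (Finsupp.equivFunOnFinite.symm u'.1) (g u')
      with hPdef
    have hdeg : P.totalDegree < q := by
      refine lt_of_le_of_lt (MvPolynomial.totalDegree_finset_sum _ _) ?_
      rw [Finset.sup_lt_iff (show (⊥ : ℕ) < q from hq)]
      intro u' _
      refine lt_of_le_of_lt (MvPolynomial.totalDegree_monomial_le _ _) ?_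
      have h2 : ((Finsupp.equivFunOnFinite.symm u'.1).sum fun _ => id)
          = ∑ j, u'.1 j := by
        rw [Finsupp.sum_fintype _ _ (fun _ => rfl)]
        simp
      rw [h2]
      have h3 := u'.2
      omega
    have hvanish : ∀ v : Fin n → Fin q, Monotone v →
        eval (fun j => i (v j)) P = 0 := by
      intro v hv
      have hx : (fun j => i (v j)) ∈ J := ⟨v, hv, rfl⟩
      have happ := congrFun hsum ⟨_, hx⟩
      simp only [Finset.sum_apply, Pi.smul_apply, smul_eq_mul, Pi.zero_apply] at happ
      rw [hPdef, map_sum, ← happ]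
      refine Finset.sum_congr rfl fun u' _ => ?_
      rw [MvPolynomial.eval_monomial]
      congr 1
      rw [Finsupp.prod_fintype _ _ (fun _ => pow_zero _)]
      simp [fam]
    have hP0 : P = 0 := lemA (n + q) n q le_rfl i hi P hdeg hvanish
    have hcoeff := congrArg
      (MvPolynomial.coeff (Finsupp.equivFunOnFinite.symm u.1)) hP0
    rw [hPdef, MvPolynomial.coeff_sum, MvPolynomial.coeff_zero] at hcoeff
    have hsimp : ∀ u' ∈ s,
        MvPolynomial.coeff (Finsupp.equivFunOnFinite.symm u.1)
          (MvPolynomial.monomial (Finsupp.equivFunOnFinite.symm u'.1) (g u'))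
        = if u' = u then g u' else 0 := by
      intro u' _
      rw [MvPolynomial.coeff_monomial]
      congr 1
      simp only [eq_iff_iff]
      constructor
      · intro h
        exact Subtype.ext (Finsupp.equivFunOnFinite.symm.injective h)
      · intro h
        rw [h]
    rw [Finset.sum_congr rfl hsimp, Finset.sum_ite_eq' s u (fun u' => g u'),
      if_pos hu] at hcoeff
    exact hcoeff
  · -- spanning
    have hBspan : ∀ P : MvPolynomial (Fin n) F, P.totalDegree ≤ q - 1 →
        (fun x : ↥J => eval x.1 P) ∈ Submodule.span F (Set.range fam) := by
      intro P hP
      have key : ∀ d : Fin n →₀ ℕ, d ∈ P.support → (∑ j, d j) ≤ q - 1 := by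
        intro d hd
        have h1 := MvPolynomial.le_totalDegree hd
        have h2 : (d.sum fun _ e => e) = ∑ j, d j :=
          Finsupp.sum_fintype _ _ (fun _ => rfl)
        omega
      have hfeq : (fun x : ↥J => eval x.1 P)
          = ∑ d ∈ P.support.attach,
              (P.coeff d.1) • fam ⟨fun j => d.1 j, key d.1 d.2⟩ := by
        funext x
        rw [Finset.sum_apply, MvPolynomial.eval_eq',
          ← Finset.sum_attach P.support (fun d => P.coeff d * ∏ j, x.1 j ^ d j)]
        refine Finset.sum_congr rfl fun d _ => ?_
        simp [fam]
      rw [hfeq]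
      exact Submodule.sum_mem _ fun d _ =>
        Submodule.smul_mem _ _ (Submodule.subset_span ⟨_, rfl⟩)
    have hdelta : ∀ v : {v : Fin n → Fin q // Monotone v},
        (Pi.single (e v) (1 : F) : ↥J → F) ∈ Submodule.span F (Set.range fam) := by
      intro v
      refine WellFounded.induction (Finite.to_wellFoundedGT.wf)
        (C := fun v : {v : Fin n → Fin q // Monotone v} =>
          (Pi.single (e v) (1 : F) : ↥J → F) ∈ Submodule.span F (Set.range fam)) v ?_
      intro v IH
      have hc : eval (fun j => i (v.1 j)) (Gpoly i v.1) ≠ 0 := Gpoly_diag hi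
      have hGfmem := hBspan (Gpoly i v.1) (Gpoly_totalDegree hn i v.2)
      have hexp : (fun x : ↥J => eval x.1 (Gpoly i v.1))
          = ∑ w : {v : Fin n → Fin q // Monotone v},
              (eval (fun j => i (w.1 j)) (Gpoly i v.1)) • (Pi.single (e w) (1:F) : ↥J → F) := by
        funext x
        obtain ⟨w0, rfl⟩ := he_surj x
        rw [Finset.sum_apply]
        have hterm : ∀ w : {v : Fin n → Fin q // Monotone v},
            ((eval (fun j => i (w.1 j)) (Gpoly i v.1)) • (Pi.single (e w) (1:F) : ↥J → F)) (e w0)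
            = if w = w0 then eval (fun j => i (w.1 j)) (Gpoly i v.1) else 0 := by
          intro w
          rw [Pi.smul_apply, Pi.single_apply, smul_eq_mul]
          by_cases hww : w = w0
          · simp [hww]
          · have hne : e w0 ≠ e w := fun hcontra => hww (he_inj hcontra).symm
            rw [if_neg hne, if_neg hww, mul_zero]
        rw [Finset.sum_congr rfl (fun w _ => hterm w),
          Finset.sum_ite_eq' Finset.univ w0 _, if_pos (Finset.mem_univ _)]
      have hsplit : (fun x : ↥J => eval x.1 (Gpoly i v.1))
          = (eval (fun j => i (v.1 j)) (Gpoly i v.1)) • (Pi.single (e v) (1:F) : ↥J → F)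
            + ∑ w ∈ Finset.univ.erase v,
                (eval (fun j => i (w.1 j)) (Gpoly i v.1)) • (Pi.single (e w) (1:F) : ↥J → F) := by
        rw [hexp, ← Finset.add_sum_erase _ _ (Finset.mem_univ v)]
      have hrest : (∑ w ∈ Finset.univ.erase v,
            (eval (fun j => i (w.1 j)) (Gpoly i v.1)) • (Pi.single (e w) (1:F) : ↥J → F))
          ∈ Submodule.span F (Set.range fam) := by
        refine Submodule.sum_mem _ fun w hw => ?_
        rcases eq_or_ne (eval (fun j => i (w.1 j)) (Gpoly i v.1)) 0 with h0 | h0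
        · rw [h0, zero_smul]; exact Submodule.zero_mem _
        · refine Submodule.smul_mem _ _ (IH w ?_)
          have hle : v.1 ≤ w.1 := Gpoly_tri hi w.2 h0
          exact lt_of_le_of_ne (Subtype.coe_le_coe.mp hle)
            (Finset.ne_of_mem_erase hw).symm
      have hfinal : (Pi.single (e v) (1:F) : ↥J → F)
          = (eval (fun j => i (v.1 j)) (Gpoly i v.1))⁻¹ •
              (((fun x : ↥J => eval x.1 (Gpoly i v.1))
                - ∑ w ∈ Finset.univ.erase v,
                    (eval (fun j => i (w.1 j)) (Gpoly i v.1)) • (Pi.single (e w) (1:F) : ↥J → F)) : ↥J → F) := by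
        rw [hsplit, add_sub_cancel_right, smul_smul, inv_mul_cancel₀ hc, one_smul]
      rw [hfinal]
      exact Submodule.smul_mem _ _ (Submodule.sub_mem _ hGfmem hrest)
    rw [eq_top_iff]
    intro f _
    have hf : f = ∑ x : ↥J, Pi.single x (f x) := (Finset.univ_sum_single f).symm
    rw [hf]
    refine Submodule.sum_mem _ fun x _ => ?_
    obtain ⟨w, rfl⟩ := he_surj x
    have hsm : Pi.single (e w) (f (e w)) = (f (e w)) • (Pi.single (e w) (1:F) : ↥J → F) := by
      funext y
      by_cases h : y = e w <;> simp [Pi.single_apply, h]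
    rw [hsm]
    exact Submodule.smul_mem _ _ (hdelta w)
end

section
/- For each 0 ≤ s ≤ q − 1, the dimension over F of the space of functions J(n,q) → F that are restrictions of polynomials of total degree at most s equals C(n+s, s). -/
/-!
Evaluation on `J(n, q)` is injective on polynomials of total degree `< q`, so the dimension is the
number of monomials of degree `≤ s` in `n` variables, i.e. `C(n + s, s)`.

Injectivity is by induction on `n` and `q`. If `p` vanishes on `J(n, q)`, then `p(a₀, ·)` vanishes
on `J(n - 1, q)`, because prepending the smallest value keeps a tuple monotone; hence
`X₀ - a₀ ∣ p`. The cofactor has smaller degree and vanishes on the monotone tuples with values in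
`a₁, …, a_{q-1}`, since `X₀ - a₀` does not vanish there.
-/

open Function

theorem Fin.monotone_cons_bot {α : Type*} [Preorder α] [OrderBot α] {n : ℕ} {v : Fin n → α}
    (hv : Monotone v) : Monotone (Fin.cons ⊥ v : Fin (n + 1) → α) := by
  intro a b hab
  cases a using Fin.cases with
  | zero => exact bot_le
  | succ a =>
    cases b using Fin.cases with
    | zero => exact absurd hab (by simp)
    | succ b => simpa using hv (Fin.succ_le_succ_iff.mp hab)

namespace MvPolynomial

section Counting

noncomputable def degreeLeEquivDegreeEq (n s : ℕ) :
    {d : Fin n →₀ ℕ // (d.sum fun _ e => e) ≤ s} ≃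
      {d : Fin (n + 1) →₀ ℕ // (d.sum fun _ e => e) = s} where
  toFun d := ⟨Finsupp.cons (s - d.1.sum fun _ e => e) d.1, by
    rw [Finsupp.sum_cons]; have := d.2; omega⟩
  invFun d := ⟨Finsupp.tail d.1, by
    have := d.2; rw [← Finsupp.cons_tail d.1, Finsupp.sum_cons] at this; omega⟩
  left_inv d := Subtype.ext (Finsupp.tail_cons _ _)
  right_inv d := by
    have hd := d.2
    rw [← Finsupp.cons_tail d.1, Finsupp.sum_cons] at hd
    refine Subtype.ext ?_
    conv_rhs => rw [← Finsupp.cons_tail d.1]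
    simp only
    congr 1
    omega

theorem finrank_restrictTotalDegree (R : Type*) [CommRing R] [Nontrivial R] (n s : ℕ) :
    Module.finrank R (restrictTotalDegree (Fin n) R s) = (n + s).choose s := by
  rw [restrictTotalDegree, Module.finrank_eq_nat_card_basis (basisRestrictSupport R _)]
  calc Nat.card _ = Nat.card (Sym (Fin (n + 1)) s) :=
        Nat.card_congr ((degreeLeEquivDegreeEq n s).trans (Sym.equivNatSum _ s).symm)
    _ = (n + s).choose s := by
      rw [Nat.card_eq_fintype_card, Sym.card_sym_eq_choose, Fintype.card_fin, Nat.add_right_comm,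
        Nat.add_sub_cancel]

end Counting

section Vanishing

variable {R : Type*} [CommRing R] {n : ℕ}

theorem eval_eval_C_finSuccEquiv (p : MvPolynomial (Fin (n + 1)) R) (c : R) (y : Fin n → R) :
    eval y ((finSuccEquiv R n p).eval (C c)) = eval (Fin.cons c y) p := by
  rw [eval_eq_eval_mv_eval', Polynomial.eval_map, ← Polynomial.eval₂_at_apply, eval_C]

theorem totalDegree_eval_C_finSuccEquiv_le (p : MvPolynomial (Fin (n + 1)) R) (c : R) :
    ((finSuccEquiv R n p).eval (C c)).totalDegree ≤ p.totalDegree := by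
  rw [Polynomial.eval_eq_sum]
  refine (totalDegree_finsetSum _ _).trans (Finset.sup_le fun k hk => ?_)
  calc ((finSuccEquiv R n p).coeff k * C c ^ k).totalDegree
      ≤ ((finSuccEquiv R n p).coeff k).totalDegree + (C c ^ k).totalDegree := totalDegree_mul _ _
    _ = ((finSuccEquiv R n p).coeff k).totalDegree := by rw [← map_pow, totalDegree_C, add_zero]
    _ ≤ p.totalDegree := (Nat.le_add_right _ k).trans
      (totalDegree_coeff_finSuccEquiv_add_le p k (Polynomial.mem_support_iff.mp hk))

theorem X_zero_sub_C_dvd_of_eval_C_finSuccEquiv_eq_zero {p : MvPolynomial (Fin (n + 1)) R}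
    {c : R} (h : (finSuccEquiv R n p).eval (C c) = 0) : X 0 - C c ∣ p := by
  have hX : finSuccEquiv R n (X 0 - C c) = Polynomial.X - Polynomial.C (C c) := by
    simp [finSuccEquiv_apply]
  rw [← map_dvd_iff (finSuccEquiv R n), hX]
  exact Polynomial.dvd_iff_isRoot.mpr h

theorem totalDegree_X_sub_C [Nontrivial R] {σ : Type*} (i : σ) (c : R) :
    (X i - C c : MvPolynomial σ R).totalDegree = 1 := by
  refine le_antisymm ((totalDegree_sub_C_le _ _).trans (totalDegree_X i).le) ?_
  have h := totalDegree_add (X i - C c) (C c)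
  rwa [sub_add_cancel, totalDegree_X, totalDegree_C, Nat.max_zero] at h

theorem eq_zero_of_eval_monotone_eq_zero [IsDomain R] {q : ℕ} {a : Fin q → R}
    (ha : Injective a) {p : MvPolynomial (Fin n) R} (hp : p.totalDegree < q)
    (h : ∀ v : Fin n → Fin q, Monotone v → eval (a ∘ v) p = 0) : p = 0 := by
  induction n generalizing q with
  | zero =>
    have h₀ := h finZeroElim (fun i => i.elim0)
    rw [eq_C_of_isEmpty p, eval_C] at h₀
    rw [eq_C_of_isEmpty p, h₀, C_0]
  | succ n ihn =>
    induction q generalizing p with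
    | zero => omega
    | succ q ihq =>
      obtain ⟨p₁, rfl⟩ : X 0 - C (a 0) ∣ p := by
        refine X_zero_sub_C_dvd_of_eval_C_finSuccEquiv_eq_zero (ihn ha
          ((totalDegree_eval_C_finSuccEquiv_le p _).trans_lt hp) fun v hv => ?_)
        rw [eval_eval_C_finSuccEquiv, ← Fin.comp_cons]
        exact h _ (Fin.monotone_cons_bot hv)
      by_cases hp₁ : p₁ = 0
      · rw [hp₁, mul_zero]
      have hX : (X 0 - C (a 0) : MvPolynomial (Fin (n + 1)) R) ≠ 0 := by
        intro h0; simpa [h0] using totalDegree_X_sub_C (R := R) (0 : Fin (n + 1)) (a 0)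
      rw [totalDegree_mul_of_isDomain hX hp₁, totalDegree_X_sub_C] at hp
      refine absurd (ihq (ha.comp (Fin.succ_injective q)) (by omega) fun v hv => ?_) hp₁
      have hprod := h (Fin.succ ∘ v) (Fin.strictMono_succ.monotone.comp hv)
      rw [map_mul, map_sub, eval_X, eval_C] at hprod
      refine (mul_eq_zero.mp hprod).resolve_left (sub_ne_zero.mpr fun h0 => ?_)
      exact Fin.succ_ne_zero _ (ha h0)

end Vanishing

theorem finrank_span_restrict_eq_finrank_restrictTotalDegree {σ K : Type*} [Field K]
    (S : Set (σ → K)) (s : ℕ)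
    (h : ∀ p : MvPolynomial σ K, p.totalDegree ≤ s → (∀ x ∈ S, eval x p = 0) → p = 0) :
    Module.finrank K (Submodule.span K
      {f : S → K | ∃ p : MvPolynomial σ K, p.totalDegree ≤ s ∧ ∀ x : S, f x = eval x.1 p}) =
      Module.finrank K (restrictTotalDegree σ K s) := by
  let E : MvPolynomial σ K →ₗ[K] S → K := LinearMap.pi fun x => (aeval x.1).toLinearMap
  have hset : {f : S → K | ∃ p : MvPolynomial σ K, p.totalDegree ≤ s ∧
      ∀ x : S, f x = eval x.1 p} = LinearMap.range (E ∘ₗ (restrictTotalDegree σ K s).subtype) := by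
    ext f
    constructor
    · rintro ⟨p, hp, hf⟩
      exact ⟨⟨p, (mem_restrictTotalDegree _ _ p).mpr hp⟩, by ext x; simp [E, hf x]⟩
    · rintro ⟨⟨p, hp⟩, rfl⟩
      exact ⟨p, (mem_restrictTotalDegree _ _ p).mp hp, fun x => by simp [E]⟩
  rw [hset, Submodule.span_eq, LinearMap.finrank_range_of_inj]
  rw [← LinearMap.ker_eq_bot, LinearMap.ker_eq_bot']
  rintro ⟨p, hp⟩ hE
  exact Subtype.ext (h p ((mem_restrictTotalDegree _ _ p).mp hp) fun x hx => congrFun hE ⟨x, hx⟩)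

end MvPolynomial

theorem stmt_7_general {F : Type*} [Field F] (n q : ℕ) (hq : 1 ≤ q)
    (i : Fin q → F) (hi : Function.Injective i) (s : ℕ) (hs : s ≤ q - 1) :
    let J : Set (Fin n → F) :=
      {x | ∃ v : Fin n → Fin q, Monotone v ∧ x = fun j => i (v j)}
    Module.finrank F (Submodule.span F
      {f : J → F | ∃ p : MvPolynomial (Fin n) F, p.totalDegree ≤ s ∧
        ∀ x : J, f x = MvPolynomial.eval x.1 p}) = (n + s).choose s := by
  intro J
  rw [MvPolynomial.finrank_span_restrict_eq_finrank_restrictTotalDegree,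
    MvPolynomial.finrank_restrictTotalDegree]
  rintro p hp hvan
  exact MvPolynomial.eq_zero_of_eval_monotone_eq_zero hi (by omega)
    fun v hv => hvan _ ⟨v, hv, rfl⟩

theorem stmt_7 {F : Type*} [Field F] (n q : ℕ) (hn : 1 ≤ n) (hq : 1 ≤ q)
    (i : Fin q → F) (hi : Function.Injective i) (s : ℕ) (hs : s ≤ q - 1) :
    let J : Set (Fin n → F) :=
      {x | ∃ v : Fin n → Fin q, Monotone v ∧ x = fun j => i (v j)}
    Module.finrank F (Submodule.span F
      {f : J → F | ∃ p : MvPolynomial (Fin n) F, p.totalDegree ≤ s ∧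
        ∀ x : J, f x = MvPolynomial.eval x.1 p}) = (n + s).choose s :=
  stmt_7_general n q hq i hi s hs
end

section
/- Let s = (s_1,...,s_n) ∈ J(n,q) ⊆ [q]^n (with i the identity embedding of [q] into Q). Define Q(x) as the product of the linear polynomials x_1 − t for all t ∈ [q] with t < s_1, x_n − t for all t ∈ [q] with t > s_n, and, for each index j > 1 with k := s_j − s_{j−1} > 0, the polynomials (x_j − x_{j−1}), (x_j − x_{j−1} − 1), ..., (x_j − x_{j−1} − (k−1)). Then Q has exactly q − 1 linear factors, Q(s) ≠ 0, and Q(t) = 0 for every t ∈ J(n,q) with t ≠ s. -/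
/-! If `Q(t) ≠ 0` at a point `t` of `J(n,q)`, each group of factors rules out exactly the values
below those at `s`: `t₁ ≥ s₁`, `tₙ ≤ sₙ` and `t_j - t_{j-1} ≥ s_j - s_{j-1}`. Then `t - s` is
monotone, nonnegative at the first index and nonpositive at the last, hence zero. The factor
count telescopes to `(s₁ - 1) + (q - sₙ) + (sₙ - s₁) = q - 1`. -/

open Finset MvPolynomial

theorem Finset.card_filter_Icc_one_lt {a q : ℕ} (h : a ≤ q + 1) :
    #{t ∈ Icc 1 q | t < a} = a - 1 := by
  rw [← Nat.card_Ico]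
  congr 1
  ext t
  simp only [mem_filter, mem_Icc, mem_Ico]
  omega

theorem Finset.card_filter_Icc_one_gt (a q : ℕ) : #{t ∈ Icc 1 q | a < t} = q - a := by
  rw [← Nat.card_Ioc]
  congr 1
  ext t
  simp only [mem_filter, mem_Icc, mem_Ioc]
  omega

theorem Fin.sum_univ_succ_tsub_castSucc {m : ℕ} {f : Fin (m + 1) → ℕ} (hf : Monotone f) :
    ∑ j : Fin m, (f j.succ - f j.castSucc) = f (last m) - f 0 := by
  induction m with
  | zero => simp
  | succ m ih =>
    have h := ih (hf.comp Fin.strictMono_castSucc.monotone)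
    simp only [Function.comp_apply, Fin.castSucc_zero] at h
    rw [Fin.sum_univ_castSucc]
    simp only [Fin.succ_castSucc, h, Fin.succ_last, Nat.succ_eq_add_one]
    have h1 : f 0 ≤ f (last m).castSucc := hf (Fin.zero_le _)
    have h2 : f (last m).castSucc ≤ f (last (m + 1)) := hf (Fin.le_last _)
    omega

theorem Fin.eq_of_le_of_forall_sub_le {α : Type*} [AddCommGroup α] [PartialOrder α]
    [IsOrderedAddMonoid α] {m : ℕ} {s t : Fin (m + 1) → α} (h0 : s 0 ≤ t 0)
    (hlast : t (last m) ≤ s (last m))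
    (hstep : ∀ j : Fin m, s j.succ - s j.castSucc ≤ t j.succ - t j.castSucc) : t = s := by
  have hmono : Monotone (t - s) := Fin.monotone_iff_le_succ.2 fun j => by
    have h := sub_le_sub_iff.1 (hstep j)
    rw [Pi.sub_apply, Pi.sub_apply, sub_le_sub_iff, add_comm (t _)]
    exact h
  funext j
  have hlow : 0 ≤ (t - s) j := (sub_nonneg.2 h0).trans (hmono (Fin.zero_le j))
  have hhigh : (t - s) j ≤ 0 := (hmono (Fin.le_last j)).trans (sub_nonpos.2 hlast)
  exact sub_eq_zero.1 (le_antisymm hhigh hlow)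

@[to_additive]
theorem Fin.prod_filter_val_pos {M : Type*} [CommMonoid M] {m : ℕ} (f : Fin (m + 1) → M) :
    ∏ j ∈ univ.filter (fun j : Fin (m + 1) => 0 < j.val), f j = ∏ j : Fin m, f j.succ := by
  rw [← Fin.prod_Ioi_zero]
  congr 1
  ext j
  rw [mem_filter, mem_Ioi, Fin.lt_def, Fin.val_zero]
  simp

/-- `Q` for `n = m + 1`, with the index `j - 1` of the factor `x_j - x_{j-1}` written `castSucc`. -/
noncomputable def separatingPoly (q : ℕ) {m : ℕ} (s : Fin (m + 1) → ℕ) :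
    MvPolynomial (Fin (m + 1)) ℚ :=
  (∏ t ∈ Icc 1 q with t < s 0, (X 0 - C (t : ℚ))) *
  (∏ t ∈ Icc 1 q with s (Fin.last m) < t, (X (Fin.last m) - C (t : ℚ))) *
  ∏ j : Fin m, ∏ r ∈ range (s j.succ - s j.castSucc), (X j.succ - X j.castSucc - C (r : ℚ))

theorem eval_separatingPoly_ne_zero_iff (q : ℕ) {m : ℕ} (s : Fin (m + 1) → ℕ)
    (x : Fin (m + 1) → ℚ) :
    eval x (separatingPoly q s) ≠ 0 ↔
      (∀ a ∈ Icc 1 q, a < s 0 → x 0 ≠ a) ∧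
      (∀ a ∈ Icc 1 q, s (Fin.last m) < a → x (Fin.last m) ≠ a) ∧
      ∀ j : Fin m, ∀ r < s j.succ - s j.castSucc, x j.succ - x j.castSucc ≠ r := by
  simp [separatingPoly, prod_ne_zero_iff, sub_ne_zero, and_assoc]

theorem eval_separatingPoly_self_ne_zero (q : ℕ) {m : ℕ} (s : Fin (m + 1) → ℕ) :
    eval (fun j => (s j : ℚ)) (separatingPoly q s) ≠ 0 := by
  rw [eval_separatingPoly_ne_zero_iff]
  refine ⟨fun a _ ha => ?_, fun a _ ha => ?_, fun j r hr => ?_⟩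
  · exact_mod_cast ha.ne'
  · exact_mod_cast ha.ne
  · have hlt : s j.castSucc + r < s j.succ := by omega
    intro h
    have : (s j.succ : ℚ) = s j.castSucc + r := by linarith
    norm_cast at this
    omega

theorem eq_of_eval_separatingPoly_ne_zero {q m : ℕ} {s t : Fin (m + 1) → ℕ}
    (ht : ∀ j, 1 ≤ t j ∧ t j ≤ q) (htm : Monotone t)
    (h : eval (fun j => (t j : ℚ)) (separatingPoly q s) ≠ 0) : t = s := by
  obtain ⟨hfirst, hlast, hstep⟩ := (eval_separatingPoly_ne_zero_iff q s _).1 h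
  have h0 : s 0 ≤ t 0 := not_lt.1 fun hlt => hfirst (t 0) (mem_Icc.2 (ht 0)) hlt rfl
  have hl : t (Fin.last m) ≤ s (Fin.last m) :=
    not_lt.1 fun hlt => hlast _ (mem_Icc.2 (ht _)) hlt rfl
  have hsteps (j : Fin m) :
      (s j.succ : ℚ) - s j.castSucc ≤ (t j.succ : ℚ) - t j.castSucc := by
    have hd : t j.castSucc ≤ t j.succ := htm (Fin.castSucc_le_succ j)
    have : s j.succ - s j.castSucc ≤ t j.succ - t j.castSucc :=
      not_lt.1 fun hlt => hstep j _ hlt (by push_cast [hd]; ring)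
    have : s j.succ ≤ s j.castSucc + (t j.succ - t j.castSucc) := by omega
    qify [hd] at this
    linarith
  have key := Fin.eq_of_le_of_forall_sub_le (s := fun j => (s j : ℚ)) (t := fun j => (t j : ℚ))
    (by exact_mod_cast h0) (by exact_mod_cast hl) hsteps
  exact funext fun j => by exact_mod_cast congrFun key j

theorem stmt_10_general (n q : ℕ) (hn : 0 < n)
    (s : Fin n → ℕ) (hs : ∀ j, 1 ≤ s j ∧ s j ≤ q) (hmono : Monotone s) :
    let first : Fin n := ⟨0, hn⟩
    let last : Fin n := ⟨n - 1, Nat.sub_lt hn Nat.one_pos⟩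
    let pred : Fin n → Fin n := fun j =>
      ⟨j.val - 1, Nat.lt_of_le_of_lt (Nat.sub_le j.val 1) j.isLt⟩
    let Q : MvPolynomial (Fin n) ℚ :=
      (∏ t ∈ (Finset.Icc 1 q).filter (fun t => t < s first),
        (MvPolynomial.X first - MvPolynomial.C (t : ℚ))) *
      (∏ t ∈ (Finset.Icc 1 q).filter (fun t => s last < t),
        (MvPolynomial.X last - MvPolynomial.C (t : ℚ))) *
      ∏ j ∈ Finset.univ.filter (fun j : Fin n => 0 < j.val),
        ∏ r ∈ Finset.range (s j - s (pred j)),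
          (MvPolynomial.X j - MvPolynomial.X (pred j) - MvPolynomial.C (r : ℚ))
    (((Finset.Icc 1 q).filter (fun t => t < s first)).card +
      ((Finset.Icc 1 q).filter (fun t => s last < t)).card +
      ∑ j ∈ Finset.univ.filter (fun j : Fin n => 0 < j.val), (s j - s (pred j))
        = q - 1) ∧
    MvPolynomial.eval (fun j => (s j : ℚ)) Q ≠ 0 ∧
    (∀ t : Fin n → ℕ, (∀ j, 1 ≤ t j ∧ t j ≤ q) → Monotone t → t ≠ s →
      MvPolynomial.eval (fun j => (t j : ℚ)) Q = 0) := by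
  intro first last pred Q
  obtain ⟨m, rfl⟩ := Nat.exists_eq_add_one_of_ne_zero hn.ne'
  have hfirst : first = 0 := rfl
  have hlast : last = Fin.last m := rfl
  have hpred (j : Fin m) : pred j.succ = j.castSucc := rfl
  have hQ : Q = separatingPoly q s := by
    simp only [Q, Fin.prod_filter_val_pos]
    rfl
  rw [hQ, Fin.sum_filter_val_pos, hfirst, hlast]
  simp only [hpred]
  refine ⟨?_, eval_separatingPoly_self_ne_zero q s, fun t ht htm hne => ?_⟩
  · have h0 := hs 0
    have hl := hs (Fin.last m)
    have h0l := hmono (Fin.zero_le (Fin.last m))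
    rw [card_filter_Icc_one_lt (by omega), card_filter_Icc_one_gt,
      Fin.sum_univ_succ_tsub_castSucc hmono]
    omega
  · by_contra h
    exact hne (eq_of_eval_separatingPoly_ne_zero ht htm h)

theorem stmt_10 (n q : ℕ) (hn : 0 < n) (hq : 1 ≤ q)
    (s : Fin n → ℕ) (hs : ∀ j, 1 ≤ s j ∧ s j ≤ q) (hmono : Monotone s) :
    let first : Fin n := ⟨0, hn⟩
    let last : Fin n := ⟨n - 1, Nat.sub_lt hn Nat.one_pos⟩
    let pred : Fin n → Fin n := fun j =>
      ⟨j.val - 1, Nat.lt_of_le_of_lt (Nat.sub_le j.val 1) j.isLt⟩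
    let Q : MvPolynomial (Fin n) ℚ :=
      (∏ t ∈ (Finset.Icc 1 q).filter (fun t => t < s first),
        (MvPolynomial.X first - MvPolynomial.C (t : ℚ))) *
      (∏ t ∈ (Finset.Icc 1 q).filter (fun t => s last < t),
        (MvPolynomial.X last - MvPolynomial.C (t : ℚ))) *
      ∏ j ∈ Finset.univ.filter (fun j : Fin n => 0 < j.val),
        ∏ r ∈ Finset.range (s j - s (pred j)),
          (MvPolynomial.X j - MvPolynomial.X (pred j) - MvPolynomial.C (r : ℚ))
    (((Finset.Icc 1 q).filter (fun t => t < s first)).card +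
      ((Finset.Icc 1 q).filter (fun t => s last < t)).card +
      ∑ j ∈ Finset.univ.filter (fun j : Fin n => 0 < j.val), (s j - s (pred j))
        = q - 1) ∧
    MvPolynomial.eval (fun j => (s j : ℚ)) Q ≠ 0 ∧
    (∀ t : Fin n → ℕ, (∀ j, 1 ≤ t j ∧ t j ≤ q) → Monotone t → t ≠ s →
      MvPolynomial.eval (fun j => (t j : ℚ)) Q = 0) :=
  stmt_10_general n q hn s hs hmono
end

section
/- Every increasing Nikodym set B ⊆ F_q^n satisfies |B| ≥ C(n+q−2, n). -/
open MvPolynomial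

private lemma nik_totalDeg_mul {F : Type*} [Field F] {n : ℕ} (j : Fin n) (a : F)
    (f : MvPolynomial (Fin n) F) (hf : f ≠ 0) :
    f.totalDegree + 1 ≤ ((X j - C a) * f).totalDegree := by
  obtain ⟨d, hd, hds⟩ := Finset.exists_mem_eq_sup f.support
    (Finset.nonempty_iff_ne_empty.2 (by simpa using hf)) (fun s => s.sum fun _ e => e)
  have hdsum : (d.sum fun _ e => e) = f.totalDegree := hds.symm
  set e : (Fin n) →₀ ℕ := Finsupp.single j 1 + d with he
  have hesum : (e.sum fun _ e => e) = f.totalDegree + 1 := by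
    rw [he, Finsupp.sum_add_index' (fun _ => rfl) (fun _ _ _ => rfl),
      Finsupp.sum_single_index rfl, hdsum, add_comm]
  have hzero : coeff e f = 0 :=
    coeff_eq_zero_of_totalDegree_lt (by show f.totalDegree < e.sum fun _ e => e; rw [hesum]; omega)
  have hce : coeff e ((X j - C a) * f) = coeff d f := by
    rw [sub_mul, coeff_sub, coeff_C_mul, hzero, mul_zero, sub_zero, he, coeff_X_mul]
  have hmem : e ∈ ((X j - C a) * f).support := by
    rw [mem_support_iff, hce]
    exact mem_support_iff.1 hd
  calc f.totalDegree + 1 = e.sum fun _ e => e := hesum.symm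
    _ ≤ _ := le_totalDegree hmem

private lemma nik_natDegree_eval₂_le {F : Type*} [Field F] {n : ℕ} (P : MvPolynomial (Fin n) F)
    (G : Fin n → Polynomial F) (hG : ∀ j, (G j).natDegree ≤ 1) :
    (eval₂ Polynomial.C G P).natDegree ≤ P.totalDegree := by
  rw [eval₂_eq']
  apply Polynomial.natDegree_sum_le_of_forall_le
  intro d hd
  refine le_trans Polynomial.natDegree_mul_le ?_
  rw [Polynomial.natDegree_C, zero_add]
  refine le_trans (Polynomial.natDegree_prod_le _ _) (le_trans ?_ (le_totalDegree hd))
  have : (d.sum fun _ e => e) = ∑ i, d i := Finsupp.sum_fintype _ _ (fun _ => rfl)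
  rw [this]
  refine Finset.sum_le_sum fun j _ => ?_
  refine le_trans Polynomial.natDegree_pow_le ?_
  calc d j * (G j).natDegree ≤ d j * 1 := Nat.mul_le_mul_left _ (hG j)
    _ = d j := mul_one _

private lemma nik_monotone_cons_zero {n m : ℕ} {z : Fin n → Fin (m+1)} (hz : Monotone z) :
    Monotone (Fin.cons 0 z : Fin (n+1) → Fin (m+1)) := by
  intro x y hxy
  induction x using Fin.cases with
  | zero =>
    induction y using Fin.cases with
    | zero => exact le_rfl
    | succ y' => simp only [Fin.cons_zero, Fin.cons_succ]; exact Fin.zero_le _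
  | succ x' =>
    induction y using Fin.cases with
    | zero => exact absurd (Fin.le_zero_iff.1 hxy) (Fin.succ_ne_zero x')
    | succ y' =>
      simp only [Fin.cons_succ]
      exact hz (by rwa [Fin.succ_le_succ_iff] at hxy)

private lemma nik_vanish {F : Type*} [Field F] :
    ∀ (n m : ℕ) (a : Fin m → F), Function.Injective a →
      ∀ P : MvPolynomial (Fin n) F, P.totalDegree < m →
        (∀ z : Fin n → Fin m, Monotone z → eval (a ∘ z) P = 0) → P = 0 := by
  intro n
  induction n with
  | zero =>
    intro m a _ P _ hvan
    obtain ⟨x, rfl⟩ := C_surjective (Fin 0) P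
    have h := hvan (fun j => j.elim0) (fun u _ _ => u.elim0)
    rw [eval_C] at h
    rw [h, map_zero]
  | succ n IHn =>
    intro m
    induction m with
    | zero => intro a _ P hdeg _; exact absurd hdeg (Nat.not_lt_zero _)
    | succ m IHm =>
      intro a ha P hdeg hvan
      set p : Polynomial (MvPolynomial (Fin n) F) := finSuccEquiv F n P with hp
      have hdegc : ∀ i : ℕ, (p.coeff i).totalDegree < m + 1 := by
        intro i
        by_cases h : p.coeff i = 0
        · rw [h, totalDegree_zero]; omega
        · have h2 := totalDegree_coeff_finSuccEquiv_add_le P i h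
          rw [← hp] at h2
          omega
      have key : ∀ s : Fin n → F, eval s (p.eval (C (a 0))) = eval (Fin.cons (a 0) s) P := by
        intro s
        rw [eval_eq_eval_mv_eval', Polynomial.eval_map]
        calc eval s (p.eval (C (a 0)))
            = (eval s : MvPolynomial (Fin n) F →+* F) (p.eval₂ (RingHom.id _) (C (a 0))) := rfl
          _ = p.eval₂ ((eval s : MvPolynomial (Fin n) F →+* F).comp (RingHom.id _))
                (eval s (C (a 0))) := Polynomial.hom_eval₂ _ _ _ _
          _ = p.eval₂ (eval s) (a 0) := by rw [RingHom.comp_id, eval_C]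
      have hP0 : p.eval (C (a 0)) = 0 := by
        apply IHn (m+1) a ha
        · rw [Polynomial.eval_eq_sum_range]
          refine lt_of_le_of_lt (totalDegree_finset_sum _ _) ?_
          rw [Finset.sup_lt_iff (by simp : (⊥ : ℕ) < m + 1)]
          intro i _
          refine lt_of_le_of_lt (totalDegree_mul _ _) ?_
          have h1 : (C (a 0) ^ i : MvPolynomial (Fin n) F).totalDegree = 0 := by
            rw [← C_pow, totalDegree_C]
          rw [h1, add_zero]
          exact hdegc i
        · intro z' hz'
          have h0 := hvan (Fin.cons 0 z') (nik_monotone_cons_zero hz')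
          rw [key (a ∘ z')]
          have hfun : (Fin.cons (a 0) (a ∘ z') : Fin (n+1) → F) = a ∘ Fin.cons 0 z' := by
            funext x
            refine Fin.cases ?_ (fun x' => ?_) x
            · simp [Fin.cons_zero]
            · simp [Fin.cons_succ]
          rw [hfun]
          exact h0
      obtain ⟨r, hr⟩ : (Polynomial.X - Polynomial.C (C (a 0))) ∣ p :=
        Polynomial.dvd_iff_isRoot.2 hP0
      set Q : MvPolynomial (Fin (n+1)) F := (finSuccEquiv F n).symm r with hQr
      have hPQ : P = (X 0 - C (a 0)) * Q := by
        apply (finSuccEquiv F n).injective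
        have hCa : finSuccEquiv F n (C (a 0)) = Polynomial.C (C (a 0)) := by
          simp [finSuccEquiv_apply]
        rw [map_mul, map_sub, finSuccEquiv_X_zero, hCa, hQr,
          (finSuccEquiv F n).apply_symm_apply, ← hr]
      by_cases hQ0 : Q = 0
      · rw [hPQ, hQ0, mul_zero]
      · have hdegQ : Q.totalDegree < m := by
          have h1 := nik_totalDeg_mul 0 (a 0) Q hQ0
          rw [← hPQ] at h1
          omega
        have hvanQ : ∀ z : Fin (n+1) → Fin m, Monotone z →
            eval ((a ∘ Fin.succ) ∘ z) Q = 0 := by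
          intro z hz
          have hmono : Monotone (fun j => (z j).succ : Fin (n+1) → Fin (m+1)) :=
            fun x y hxy => Fin.succ_le_succ_iff.2 (hz hxy)
          have h0 := hvan _ hmono
          rw [hPQ, map_mul, map_sub, eval_X, eval_C] at h0
          have hne : (a ∘ fun j => (z j).succ) 0 - a 0 ≠ 0 :=
            sub_ne_zero.2 (fun h => Fin.succ_ne_zero (z 0) (ha h))
          exact (mul_eq_zero.1 h0).resolve_left hne
        have hQ := IHm (a ∘ Fin.succ) (ha.comp (Fin.succ_injective m)) Q hdegQ hvanQ
        exact absurd hQ hQ0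

theorem stmt_16 {F : Type*} [Field F] [Fintype F] (n q : ℕ) (hn : 1 ≤ n)
    (hq : Fintype.card F = q) (i : Fin q → F) (hi : Function.Injective i)
    (B : Finset (Fin n → F))
    (hB : ∀ z : Fin n → Fin q, Monotone z →
      ∃ v : Fin n → F, v ≠ 0 ∧ ∀ t : F, t ≠ 0 →
        ((fun j => i (z j)) + t • v) ∈ B) :
    (n + q - 2).choose n ≤ B.card := by
  classical
  have hq2 : 2 ≤ q := hq ▸ Fintype.one_lt_card
  obtain ⟨k, rfl⟩ : ∃ k, q = k + 2 := ⟨q - 2, by omega⟩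
  have hgoal : n + (k + 2) - 2 = n + k := by omega
  rw [hgoal]
  have hbound : ∀ d : {d : Fin n →₀ ℕ // (d.sum fun _ e => e) ≤ k}, ∀ j, d.1 j ≤ k := by
    intro d j
    refine le_trans ?_ d.2
    by_cases h : j ∈ d.1.support
    · exact Finset.single_le_sum (fun _ _ => Nat.zero_le _) h
    · rw [Finsupp.notMem_support_iff.1 h]; exact Nat.zero_le _
  haveI : Finite {d : Fin n →₀ ℕ // (d.sum fun _ e => e) ≤ k} := by
    apply Finite.of_injective
      (fun d : {d : Fin n →₀ ℕ // (d.sum fun _ e => e) ≤ k} =>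
        (fun j => (⟨d.1 j, Nat.lt_succ_of_le (hbound d j)⟩ : Fin (k+1))))
    intro d d' h
    apply Subtype.ext; apply Finsupp.ext; intro j
    exact congrArg Fin.val (congrFun h j)
  haveI : Fintype {d : Fin n →₀ ℕ // (d.sum fun _ e => e) ≤ k} := Fintype.ofFinite _
  -- Step 1: cardinality of the index set of monomials of degree ≤ k
  have hcardD : Fintype.card {d : Fin n →₀ ℕ // (d.sum fun _ e => e) ≤ k}
      = (n + k).choose n := by
    have e1 : {d : Fin n →₀ ℕ // (d.sum fun _ e => e) ≤ k}
        ≃ {e : Fin (n+1) →₀ ℕ // (e.sum fun _ x => x) = k} :=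
      { toFun := fun d => ⟨Finsupp.cons (k - (d.1.sum fun _ e => e)) d.1, by
          rw [Finsupp.sum_cons]
          have := d.2
          omega⟩
        invFun := fun e => ⟨Finsupp.tail e.1, by
          have h := e.2
          rw [← Finsupp.cons_tail e.1, Finsupp.sum_cons] at h
          omega⟩
        left_inv := fun d => Subtype.ext (Finsupp.tail_cons _ _)
        right_inv := fun e => by
          apply Subtype.ext
          have h := e.2
          rw [← Finsupp.cons_tail e.1, Finsupp.sum_cons] at h
          have hv : k - ((Finsupp.tail e.1).sum fun _ x => x) = e.1 0 := by omega
          show Finsupp.cons (k - ((Finsupp.tail e.1).sum fun _ x => x)) (Finsupp.tail e.1) = e.1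
          rw [hv, Finsupp.cons_tail] }
    have e2 : Sym (Fin (n+1)) k ≃ {e : Fin (n+1) →₀ ℕ // (e.sum fun _ x => x) = k} :=
      Equiv.subtypeEquiv (Multiset.toFinsupp (α := Fin (n+1))).toEquiv
        (fun s => by
          rw [AddEquiv.toEquiv_eq_coe, EquivLike.coe_coe]
          constructor
          · intro h; rw [← h, ← Multiset.toFinsupp_sum_eq]; rfl
          · intro h; rw [← Multiset.toFinsupp_sum_eq s]; rw [← h]; rfl)
    rw [Fintype.card_congr (e1.trans (e2.symm.trans (Equiv.refl _))),
      Sym.card_sym_eq_choose, Fintype.card_fin]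
    have : n + 1 + k - 1 = n + k := by omega
    rw [this, Nat.choose_symm_add]
  suffices hmain : Fintype.card {d : Fin n →₀ ℕ // (d.sum fun _ e => e) ≤ k} ≤ B.card by
    omega
  by_contra hlt
  push_neg at hlt
  -- Step 2: find a nonzero polynomial of total degree ≤ k vanishing on B
  set D := {d : Fin n →₀ ℕ // (d.sum fun _ e => e) ≤ k} with hD
  let L : (D → F) →ₗ[F] ({x // x ∈ B} → F) :=
    { toFun := fun c b => ∑ z : D, c z * eval (b : Fin n → F) (monomial z.1 (1 : F))
      map_add' := by
        intro c c'; funext b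
        simp [add_mul, Finset.sum_add_distrib]
      map_smul' := by
        intro a c; funext b
        simp [Finset.mul_sum, mul_assoc] }
  have hnotinj : ¬ Function.Injective L := by
    intro hinj
    have hle := LinearMap.finrank_le_finrank_of_injective hinj
    rw [Module.finrank_fintype_fun_eq_card, Module.finrank_fintype_fun_eq_card,
      Fintype.card_coe] at hle
    rw [Fintype.card_eq_nat_card] at hle
    rw [Fintype.card_eq_nat_card] at hlt
    rw [hD] at hle
    omega
  obtain ⟨c, hc0, hLc⟩ : ∃ c : D → F, c ≠ 0 ∧ L c = 0 := by
    rw [Function.not_injective_iff] at hnotinj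
    obtain ⟨x, y, hxy, hne⟩ := hnotinj
    exact ⟨x - y, sub_ne_zero.2 hne, by rw [map_sub, hxy, sub_self]⟩
  set P : MvPolynomial (Fin n) F := ∑ z : D, monomial z.1 (c z) with hPdef
  have hevalP : ∀ b : Fin n → F, b ∈ B → eval b P = 0 := by
    intro b hb
    rw [hPdef, map_sum]
    have hterm : ∀ z : D, eval b (monomial z.1 (c z))
        = c z * eval b (monomial z.1 (1 : F)) := by
      intro z; simp [eval_monomial]
    rw [Finset.sum_congr rfl (fun z _ => hterm z)]
    exact congrFun hLc ⟨b, hb⟩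
  have hPdeg : P.totalDegree ≤ k := by
    refine le_trans (totalDegree_finset_sum _ _) (Finset.sup_le fun z _ => ?_)
    exact le_trans (totalDegree_monomial_le _ _) z.2
  have hPne : P ≠ 0 := by
    obtain ⟨z0, hz0⟩ : ∃ z0, c z0 ≠ 0 := by
      by_contra h; push_neg at h; exact hc0 (funext h)
    refine ne_zero_iff.2 ⟨z0.1, ?_⟩
    rw [hPdef, coeff_sum, Finset.sum_eq_single z0]
    · rw [coeff_monomial, if_pos rfl]; exact hz0
    · intro z _ hzne
      rw [coeff_monomial, if_neg (fun h => hzne (Subtype.ext h))]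
    · intro h; exact absurd (Finset.mem_univ z0) h
  -- Step 3: P vanishes on all increasing points
  have hJ : ∀ w : Fin n → Fin (k+2), Monotone w → eval (i ∘ w) P = 0 := by
    intro w hw
    obtain ⟨v, hv, hline⟩ := hB w hw
    set G : Fin n → Polynomial F :=
      fun j => Polynomial.C (i (w j)) + Polynomial.X * Polynomial.C (v j) with hG
    set g : Polynomial F := eval₂ Polynomial.C G P with hg
    have hGdeg : ∀ j, (G j).natDegree ≤ 1 := by
      intro j
      refine le_trans (Polynomial.natDegree_add_le _ _) ?_
      simp only [Polynomial.natDegree_C, max_le_iff]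
      constructor
      · omega
      · exact le_trans (Polynomial.natDegree_mul_C_le _ _) Polynomial.natDegree_X_le
    have hgdeg : g.natDegree ≤ k := le_trans (nik_natDegree_eval₂_le P G hGdeg) hPdeg
    have hgeval : ∀ t : F, g.eval t = eval (fun j => i (w j) + t * v j) P := by
      intro t
      have hcomp := MvPolynomial.eval₂_comp_left (Polynomial.evalRingHom t)
        (Polynomial.C : F →+* Polynomial F) G P
      have h1 : Polynomial.evalRingHom t (eval₂ Polynomial.C G P) = g.eval t := rfl
      rw [h1] at hcomp
      rw [hcomp]
      have h2 : (Polynomial.evalRingHom t).comp (Polynomial.C : F →+* Polynomial F)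
          = RingHom.id F := by
        ext x; simp
      rw [h2]
      have h3 : ((Polynomial.evalRingHom t : Polynomial F → F) ∘ G)
          = fun j => i (w j) + t * v j := by
        funext j
        show Polynomial.eval t (G j) = i (w j) + t * v j
        simp only [hG, Polynomial.eval_add, Polynomial.eval_mul, Polynomial.eval_C,
          Polynomial.eval_X]
      rw [h3]
      rfl
    have hzero : g = 0 := by
      apply Polynomial.eq_zero_of_natDegree_lt_card_of_eval_eq_zero' g
        ((Finset.univ : Finset F).erase 0)
      · intro t ht
        have htne : t ≠ 0 := (Finset.mem_erase.1 ht).1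
        rw [hgeval t]
        exact hevalP _ (hline t htne)
      · rw [Finset.card_erase_of_mem (Finset.mem_univ 0), Finset.card_univ, hq]
        omega
    have h4 := congrArg (Polynomial.eval (0 : F)) hzero
    rw [hgeval 0, Polynomial.eval_zero] at h4
    have h5 : (fun j => i (w j) + 0 * v j) = i ∘ w := by
      funext j; simp
    rwa [h5] at h4
  exact hPne (nik_vanish n (k+2) i hi P (lt_of_le_of_lt hPdeg (by omega)) hJ)
end

section
/- The set T(n,q) = ∪_{0 ≠ v ∈ J(n,q)} {t·v : t ∈ F_q} satisfies |T(n,q)| ≤ (q−1)·(C(q+n−1, n) − (q−1)) + 1, and T(n,q) is an increasing Kakeya set. -/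
/-!
Every line of `T` through a constant direction is contained in the line of constant vectors, which
has `q` points. Each remaining line is spanned by `i ∘ v` for a nonconstant monotone `v`, and
contributes at most `q - 1` further points. Monotone tuples `Fin n → Fin q` correspond to
multisets of size `n` in `Fin q`, of which there are `C(q + n - 1, n)`, and `q` of them are
constant.
-/

open Set

section MonotoneTuples

variable {α : Type*} [LinearOrder α] {n : ℕ}

theorem injective_monotone_toSym :
    Function.Injective fun v : {v : Fin n → α // Monotone v} =>
      (⟨(List.ofFn v.1 : Multiset α), by simp⟩ : Sym α n) := by
  intro v w h
  have hperm : (List.ofFn v.1).Perm (List.ofFn w.1) :=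
    Multiset.coe_eq_coe.mp (congrArg Subtype.val h)
  exact Subtype.ext <| List.ofFn_injective <|
    hperm.eq_of_sortedLE v.2.sortedLE_ofFn w.2.sortedLE_ofFn

theorem ncard_monotone_le [Fintype α] :
    {v : Fin n → α | Monotone v}.ncard ≤ (Fintype.card α + n - 1).choose n := by
  rw [← Nat.card_coe_set_eq, ← Sym.card_sym_eq_choose, ← Nat.card_eq_fintype_card]
  exact Nat.card_le_card_of_injective _ injective_monotone_toSym

theorem ncard_monotone_diff_const_add_card_le [Fintype α] (hn : n ≠ 0) :
    ({v : Fin n → α | Monotone v} \ range (Function.const (Fin n))).ncard + Fintype.card α ≤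
      (Fintype.card α + n - 1).choose n := by
  have : Nonempty (Fin n) := ⟨⟨0, Nat.pos_of_ne_zero hn⟩⟩
  have hconst : range (Function.const (Fin n)) ⊆ {v : Fin n → α | Monotone v} := by
    rintro _ ⟨c, rfl⟩
    exact monotone_const
  have hcard : (range (Function.const (Fin n) : α → Fin n → α)).ncard = Fintype.card α := by
    rw [ncard_range_of_injective Function.const_injective, Nat.card_eq_fintype_card]
  rw [ncard_sdiff hconst, hcard]
  have := ncard_le_ncard hconst
  have := ncard_monotone_le (α := α) (n := n)
  omega

end MonotoneTuples

theorem ncard_cone_le {K V : Type*} [Semiring K] [Fintype K] [AddCommMonoid V] [Module K V]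
    [Finite V] (L : Submodule K V) (W : Set V) :
    {x | ∃ t : K, ∃ w ∈ W, x = t • w}.ncard ≤
      (Fintype.card K - 1) * (W \ L).ncard + Nat.card L := by
  have hcover : {x | ∃ t : K, ∃ w ∈ W, x = t • w} ⊆
      (fun p : K × V => p.1 • p.2) '' ({0}ᶜ ×ˢ (W \ L)) ∪ L := by
    rintro _ ⟨t, w, hw, rfl⟩
    by_cases ht : t = 0
    · exact Or.inr (by simp [ht])
    by_cases hwL : w ∈ L
    · exact Or.inr (L.smul_mem t hwL)
    · exact Or.inl ⟨(t, w), ⟨ht, hw, hwL⟩, rfl⟩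
  have hunits : ({0}ᶜ : Set K).ncard = Fintype.card K - 1 := by
    rw [ncard_compl, ncard_singleton, Nat.card_eq_fintype_card]
  calc _ ≤ ((fun p : K × V => p.1 • p.2) '' ({0}ᶜ ×ˢ (W \ L)) ∪ L).ncard := ncard_le_ncard hcover
    _ ≤ ((fun p : K × V => p.1 • p.2) '' ({0}ᶜ ×ˢ (W \ L))).ncard + (L : Set V).ncard :=
      ncard_union_le _ _
    _ ≤ ({0}ᶜ ×ˢ (W \ L)).ncard + (L : Set V).ncard :=
      Nat.add_le_add_right (ncard_image_le (toFinite _)) _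
    _ = (Fintype.card K - 1) * (W \ L).ncard + Nat.card L := by
      rw [ncard_prod, hunits, ← Nat.card_coe_set_eq]
      rfl

theorem ncard_image_comp_diff_span_one_le {K α : Type*} [Semiring K] [Finite α] {n : ℕ}
    (f : α → K) (S : Set (Fin n → α)) :
    ((fun v j => f (v j)) '' S \ (K ∙ (1 : Fin n → K))).ncard ≤
      (S \ range (Function.const (Fin n))).ncard := by
  refine (ncard_le_ncard (t := (fun v j => f (v j)) '' (S \ range (Function.const (Fin n)))) ?_
    (toFinite _)).trans (ncard_image_le (toFinite _))
  rintro _ ⟨⟨v, hv, rfl⟩, hnot⟩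
  refine ⟨v, ⟨hv, ?_⟩, rfl⟩
  rintro ⟨c, rfl⟩
  exact hnot (Submodule.mem_span_singleton.mpr ⟨f c, by ext; simp⟩)

theorem card_span_one {K : Type*} [DivisionRing K] {n : ℕ} (hn : n ≠ 0) :
    Nat.card (K ∙ (1 : Fin n → K)) = Nat.card K := by
  have : Nonempty (Fin n) := ⟨⟨0, Nat.pos_of_ne_zero hn⟩⟩
  exact (Nat.card_congr (LinearEquiv.toSpanNonzeroSingleton K _ 1 one_ne_zero).toEquiv).symm

theorem stmt_17_general {F : Type*} [Field F] [Fintype F] (n q : ℕ) (hn : 1 ≤ n)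
    (hq : Fintype.card F = q) (i : Fin q → F) :
    let T : Set (Fin n → F) :=
      {x | ∃ v : Fin n → Fin q, Monotone v ∧ (fun j => i (v j)) ≠ (0 : Fin n → F) ∧
        ∃ t : F, x = t • fun j => i (v j)}
    Nat.card T ≤ (q - 1) * ((q + n - 1).choose n - (q - 1)) + 1 ∧
    (∀ v : Fin n → Fin q, Monotone v → (fun j => i (v j)) ≠ (0 : Fin n → F) →
      ∃ a : Fin n → F, ∀ t : F, (a + t • fun j => i (v j)) ∈ T) := by
  intro T
  refine ⟨?_, fun v hv hne => ⟨0, fun t => ⟨v, hv, hne, t, by rw [zero_add]⟩⟩⟩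
  have hn0 : n ≠ 0 := Nat.one_le_iff_ne_zero.mp hn
  have hq1 : 1 ≤ q := hq ▸ Fintype.card_pos
  set M := {v : Fin n → Fin q | Monotone v}
  set W := (fun (v : Fin n → Fin q) j => i (v j)) '' M
  set L := F ∙ (1 : Fin n → F)
  have hT : T ⊆ {x | ∃ t : F, ∃ w ∈ W, x = t • w} := by
    rintro _ ⟨v, hv, -, t, rfl⟩
    exact ⟨t, _, ⟨v, hv, rfl⟩, rfl⟩
  have hcount : (M \ range (Function.const (Fin n))).ncard + q ≤ (q + n - 1).choose n := by
    simpa using ncard_monotone_diff_const_add_card_le (α := Fin q) hn0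
  calc Nat.card T = T.ncard := Nat.card_coe_set_eq T
    _ ≤ {x | ∃ t : F, ∃ w ∈ W, x = t • w}.ncard := ncard_le_ncard hT
    _ ≤ (q - 1) * (W \ L).ncard + q := by
      have hL : Nat.card L = q := (card_span_one hn0).trans (Nat.card_eq_fintype_card.trans hq)
      simpa only [hL, hq] using ncard_cone_le L W
    _ ≤ (q - 1) * (M \ range (Function.const (Fin n))).ncard + q := by
      gcongr
      exact ncard_image_comp_diff_span_one_le i M
    _ = (q - 1) * ((M \ range (Function.const (Fin n))).ncard + 1) + 1 := by
      rw [Nat.mul_succ]; omega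
    _ ≤ (q - 1) * ((q + n - 1).choose n - (q - 1)) + 1 := by gcongr; omega

theorem stmt_17 {F : Type*} [Field F] [Fintype F] (n q : ℕ) (hn : 1 ≤ n)
    (hq : Fintype.card F = q) (i : Fin q → F) (hi : Function.Injective i) :
    let T : Set (Fin n → F) :=
      {x | ∃ v : Fin n → Fin q, Monotone v ∧ (fun j => i (v j)) ≠ (0 : Fin n → F) ∧
        ∃ t : F, x = t • fun j => i (v j)}
    Nat.card T ≤ (q - 1) * ((q + n - 1).choose n - (q - 1)) + 1 ∧
    (∀ v : Fin n → Fin q, Monotone v → (fun j => i (v j)) ≠ (0 : Fin n → F) →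
      ∃ a : Fin n → F, ∀ t : F, (a + t • fun j => i (v j)) ∈ T) :=
  stmt_17_general n q hn hq i
end

section
/- For every super decomposition (I_1,...,I_n) of [q], the polynomial f_{I_1,...,I_n}(x_1,...,x_n) = ∏_{j=1}^n ∏_{t ∈ i(I_j)} (x_j − t) vanishes at every point of SJ(n,q). -/
/-!
With `w m = v m + 1` the 1-based position of the `m`-th coordinate, it suffices to find `m` with
`j_{m-1} < w m < j_m`, i.e. `w m ∈ I_m`: then the factor `x_m - i(w m)` vanishes at the point.
If no such `m` existed, induction along the strictly increasing `w` would give `j_m ≤ w m` for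
every `m`, contradicting `w last < q + 1 = j_n`.
-/

open MvPolynomial

theorem Fin.exists_lt_lt_of_strictMono {α : Type*} [LinearOrder α] {n : ℕ}
    (a : Fin (n + 2) → α) (w : Fin (n + 1) → α) (hw : StrictMono w)
    (h0 : a 0 < w 0) (hlast : w (Fin.last n) < a (Fin.last (n + 1))) :
    ∃ m : Fin (n + 1), a m.castSucc < w m ∧ w m < a m.succ := by
  by_contra! hgap
  have hle : ∀ m : Fin (n + 1), a m.succ ≤ w m := by
    refine Fin.induction (hgap 0 h0) fun k ih => hgap k.succ ?_
    rw [← Fin.succ_castSucc]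
    exact ih.trans_lt (hw k.castSucc_lt_succ)
  exact (hle (Fin.last n)).not_gt hlast

theorem MvPolynomial.eval_prod_prod_X_sub_C_eq_zero {R σ ι : Type*} [CommRing R] [Fintype σ]
    (x : σ → R) (S : σ → Finset ι) (c : ι → R) {m : σ} {t : ι} (ht : t ∈ S m)
    (hx : x m = c t) :
    eval x (∏ m, ∏ t ∈ S m, (X m - C (c t))) = 0 := by
  rw [eval_prod]
  refine Finset.prod_eq_zero (Finset.mem_univ m) ?_
  rw [eval_prod]
  exact Finset.prod_eq_zero ht (by simp [hx])

theorem stmt_18_general {F : Type*} [Field F] (n q : ℕ)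
    (i : Fin q → F)
    (js : Fin (n + 1) → ℕ)
    (h0 : js 0 = 0) (hlast : js (Fin.last n) = q + 1)
    (v : Fin n → Fin q) (hv : StrictMono v) :
    MvPolynomial.eval (fun j => i (v j))
      (∏ m : Fin n, ∏ t ∈ Finset.univ.filter
        (fun t : Fin q => js m.castSucc < t.val + 1 ∧ t.val + 1 < js m.succ),
        (MvPolynomial.X m - MvPolynomial.C (i t))) = 0 := by
  obtain _ | n := n
  · simp [Fin.last_zero, h0] at hlast
  have hw : StrictMono fun m => (v m).val + 1 := fun a b hab => by simpa using hv hab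
  obtain ⟨m, hm⟩ := Fin.exists_lt_lt_of_strictMono js _ hw (by simp [h0])
    (by simp [hlast, (v (Fin.last n)).isLt])
  exact eval_prod_prod_X_sub_C_eq_zero _ _ i (m := m) (t := v m) (by simpa using hm) rfl

theorem stmt_18 {F : Type*} [Field F] (n q : ℕ) (hn : 1 ≤ n) (hnq : n ≤ q)
    (i : Fin q → F) (hi : Function.Injective i)
    (js : Fin (n + 1) → ℕ) (hjs : StrictMono js)
    (h0 : js 0 = 0) (hlast : js (Fin.last n) = q + 1)
    (v : Fin n → Fin q) (hv : StrictMono v) :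
    MvPolynomial.eval (fun j => i (v j))
      (∏ m : Fin n, ∏ t ∈ Finset.univ.filter
        (fun t : Fin q => js m.castSucc < t.val + 1 ∧ t.val + 1 < js m.succ),
        (MvPolynomial.X m - MvPolynomial.C (i t))) = 0 :=
  stmt_18_general n q i js h0 hlast v hv
end

section
/- Let F be a downset in J(n,q) (i.e., if u, v ∈ J(n,q), v ∈ F and u ≤ v componentwise, then u ∈ F). For g ∈ I(n,q) with i(g) ∉ F, define I_1(g) = {1,...,g_1 − 1} and I_j(g) = {g_{j−1},...,g_j − 1} for 2 ≤ j ≤ n, and f_g(x) = ∏_{j=1}^n ∏_{t ∈ i(I_j(g))} (x_j − t). Then f_g vanishes at every point of F. -/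
/-!
Since `g ∉ 𝓕` and `𝓕` is a downset containing `v`, we cannot have `g ≤ v`; let `j` be the
first coordinate with `v j < g j`. Then `g (j - 1) ≤ v (j - 1) ≤ v j < g j`, so `v j` lies in
the block `I_j(g)` and the factor `x_j - i (v j)` of `f_g` vanishes at `v`.
-/

theorem exists_first_lt_of_not_le {ι α : Type*} [LinearOrder ι] [WellFoundedLT ι]
    [LinearOrder α] {g v : ι → α} (h : ¬ g ≤ v) :
    ∃ j, v j < g j ∧ ∀ k < j, g k ≤ v k := by
  obtain ⟨j₁, hj₁⟩ : ∃ j, v j < g j := by simpa [Pi.le_def] using h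
  obtain ⟨j, hj, hmin⟩ := WellFounded.has_min wellFounded_lt {j | v j < g j} ⟨j₁, hj₁⟩
  exact ⟨j, hj, fun k hk => not_lt.mp fun hvk => hmin k hvk hk⟩

theorem MvPolynomial.eval_prod_X_sub_C_eq_zero {σ ι K : Type*} [CommRing K]
    (x : σ → K) (j : σ) (c : ι → K) {s : Finset ι} {t : ι} (ht : t ∈ s) (hx : x j = c t) :
    eval x (∏ t ∈ s, (X j - C (c t))) = 0 := by
  rw [map_prod]
  exact Finset.prod_eq_zero ht (by simp [hx])

theorem stmt_19_general {K : Type*} [Field K] (n q : ℕ)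
    (i : Fin q → K)
    (𝓕 : Set (Fin n → Fin q)) (h𝓕 : ∀ f ∈ 𝓕, Monotone f)
    (hdown : ∀ u v : Fin n → Fin q, Monotone u → v ∈ 𝓕 → u ≤ v → u ∈ 𝓕)
    (g : Fin n → Fin q) (hg : Monotone g) (hgF : g ∉ 𝓕)
    (v : Fin n → Fin q) (hv : v ∈ 𝓕) :
    MvPolynomial.eval (fun j => i (v j))
      (∏ j : Fin n, ∏ t ∈ Finset.univ.filter
        (fun t : Fin q =>
          ((0 < j.val) →
            g ⟨j.val - 1, Nat.lt_of_le_of_lt (Nat.sub_le j.val 1) j.isLt⟩ ≤ t) ∧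
          t < g j),
        (MvPolynomial.X j - MvPolynomial.C (i t))) = 0 := by
  obtain ⟨j, hvj, hmin⟩ := exists_first_lt_of_not_le fun hgv => hgF (hdown g v hg hv hgv)
  rw [map_prod]
  refine Finset.prod_eq_zero (Finset.mem_univ j)
    (MvPolynomial.eval_prod_X_sub_C_eq_zero _ j i ?_ rfl)
  refine Finset.mem_filter.mpr ⟨Finset.mem_univ _, fun hj => ?_, hvj⟩
  have hprev : (⟨j.val - 1, by omega⟩ : Fin n) < j := Fin.lt_def.mpr (Nat.sub_lt hj one_pos)
  exact (hmin _ hprev).trans (h𝓕 v hv hprev.le)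

theorem stmt_19 {K : Type*} [Field K] (n q : ℕ) (hn : 1 ≤ n) (hq : 1 ≤ q)
    (i : Fin q → K) (hi : Function.Injective i)
    (𝓕 : Set (Fin n → Fin q)) (h𝓕 : ∀ f ∈ 𝓕, Monotone f)
    (hdown : ∀ u v : Fin n → Fin q, Monotone u → v ∈ 𝓕 → u ≤ v → u ∈ 𝓕)
    (g : Fin n → Fin q) (hg : Monotone g) (hgF : g ∉ 𝓕)
    (v : Fin n → Fin q) (hv : v ∈ 𝓕) :
    MvPolynomial.eval (fun j => i (v j))
      (∏ j : Fin n, ∏ t ∈ Finset.univ.filter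
        (fun t : Fin q =>
          ((0 < j.val) →
            g ⟨j.val - 1, Nat.lt_of_le_of_lt (Nat.sub_le j.val 1) j.isLt⟩ ≤ t) ∧
          t < g j),
        (MvPolynomial.X j - MvPolynomial.C (i t))) = 0 :=
  stmt_19_general n q i 𝓕 h𝓕 hdown g hg hgF v hv
end
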